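/- arXiv:1803.02228 — 4 statements merged into one kernel-verified Lean document; each statement's English description precedes it below -/
import Mathlib

section
/- Let g : ℝ² → ℝ be a C² radially symmetric function about the origin (g(z) = h(|z|) for some function h with h continuous at 0) satisfying Δg + g = 0. Then g(z) = g(0) · J_0(|z|) for all z, where J_0 is the Bessel function of the first kind of order 0. -/
open MeasureTheory Real

/-- The Laplacian of `f : ℝ² → ℝ` at `z`. -/
noncomputable def planeLaplacian (f : ℝ × ℝ → ℝ) (z : ℝ × ℝ) : ℝ :=
  iteratedDeriv 2 (fun t => f (z.1 + t, z.2)) 0 +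
  iteratedDeriv 2 (fun t => f (z.1, z.2 + t)) 0

/-- The Euclidean norm on `ℝ × ℝ`. -/
noncomputable def euclidNorm (v : ℝ × ℝ) : ℝ := Real.sqrt (v.1 ^ 2 + v.2 ^ 2)

/-- The Bessel function `J_0(r) = (1/2π) ∫₀^{2π} exp(i r sin θ) dθ`. -/
noncomputable def besselJ0 (r : ℝ) : ℝ :=
  ((1 / (2 * (Real.pi : ℂ))) *
    ∫ θ in (0:ℝ)..(2 * Real.pi),
      Complex.exp (Complex.I * (r : ℂ) * (Real.sin θ : ℂ))).re

noncomputable def besselJ0' (r : ℝ) : ℝ :=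
  (1 / (2 * Real.pi)) * ∫ θ in (0:ℝ)..(2 * Real.pi), -(Real.sin θ * Real.sin (r * Real.sin θ))

noncomputable def besselJ0'' (r : ℝ) : ℝ :=
  (1 / (2 * Real.pi)) * ∫ θ in (0:ℝ)..(2 * Real.pi), -(Real.sin θ ^ 2 * Real.cos (r * Real.sin θ))


lemma besselJ0_eq (r : ℝ) :
    besselJ0 r = (1 / (2 * Real.pi)) * ∫ θ in (0:ℝ)..(2 * Real.pi), Real.cos (r * Real.sin θ) := by
  have key : (∫ θ in (0:ℝ)..(2 * Real.pi), Complex.exp (Complex.I * (r : ℂ) * (Real.sin θ : ℂ)))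
      = (↑(∫ θ in (0:ℝ)..(2 * Real.pi), Real.cos (r * Real.sin θ)) : ℂ)
        + (↑(∫ θ in (0:ℝ)..(2 * Real.pi), Real.sin (r * Real.sin θ)) : ℂ) * Complex.I := by
    have h1 : ∀ θ : ℝ, Complex.exp (Complex.I * (r : ℂ) * (Real.sin θ : ℂ))
        = (↑(Real.cos (r * Real.sin θ)) : ℂ) + (↑(Real.sin (r * Real.sin θ)) : ℂ) * Complex.I := by
      intro θ
      rw [show Complex.I * (r : ℂ) * (Real.sin θ : ℂ) = ((r * Real.sin θ : ℝ) : ℂ) * Complex.I by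
        push_cast; ring, Complex.exp_mul_I, ← Complex.ofReal_cos, ← Complex.ofReal_sin]
    simp_rw [h1]
    rw [intervalIntegral.integral_add, intervalIntegral.integral_mul_const,
      intervalIntegral.integral_ofReal, intervalIntegral.integral_ofReal]
    · apply Continuous.intervalIntegrable; continuity
    · apply Continuous.intervalIntegrable; continuity
  rw [besselJ0, key,
    show (1 / (2 * (Real.pi : ℂ))) = ((1 / (2 * Real.pi) : ℝ) : ℂ) by push_cast; ring,
    Complex.re_ofReal_mul]
  simp

lemma hasDerivAt_parint {F F' : ℝ → ℝ → ℝ}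
    (hcont : Continuous fun p : ℝ × ℝ => F p.1 p.2)
    (hcont' : Continuous fun p : ℝ × ℝ => F' p.1 p.2)
    (hderiv : ∀ θ x, HasDerivAt (fun y => F y θ) (F' x θ) x)
    (C : ℝ) (hC : ∀ x θ, |F' x θ| ≤ C) (x₀ : ℝ) :
    HasDerivAt (fun x => ∫ θ in (0:ℝ)..(2*π), F x θ)
      (∫ θ in (0:ℝ)..(2*π), F' x₀ θ) x₀ := by
  refine (intervalIntegral.hasDerivAt_integral_of_dominated_loc_of_deriv_le
    (𝕜 := ℝ) (μ := volume) (F := F) (F' := F') (x₀ := x₀) (a := 0) (b := 2*π)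
    (bound := fun _ => C) (s := Metric.ball x₀ 1) (Metric.ball_mem_nhds x₀ one_pos)
    (Filter.Eventually.of_forall fun x =>
      (hcont.comp (continuous_const.prodMk continuous_id)).aestronglyMeasurable)
    ((hcont.comp (continuous_const.prodMk continuous_id)).intervalIntegrable _ _)
    ((hcont'.comp (continuous_const.prodMk continuous_id)).aestronglyMeasurable)
    (Filter.Eventually.of_forall fun θ _ x _ => by
      simpa [Real.norm_eq_abs] using hC x θ)
    intervalIntegrable_const
    (Filter.Eventually.of_forall fun θ _ x _ => hderiv θ x)).2

lemma abs_sin_le (x : ℝ) : |Real.sin x| ≤ 1 := abs_le.2 ⟨Real.neg_one_le_sin x, Real.sin_le_one x⟩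
lemma abs_cos_le (x : ℝ) : |Real.cos x| ≤ 1 := abs_le.2 ⟨Real.neg_one_le_cos x, Real.cos_le_one x⟩

lemma hasDerivAt_besselJ0 (r : ℝ) : HasDerivAt besselJ0 (besselJ0' r) r := by
  have hfun : besselJ0 = fun x => (1 / (2 * Real.pi)) *
      ∫ θ in (0:ℝ)..(2 * Real.pi), Real.cos (x * Real.sin θ) := funext besselJ0_eq
  rw [hfun, besselJ0']
  refine HasDerivAt.const_mul _ ?_
  refine hasDerivAt_parint (F := fun x θ => Real.cos (x * Real.sin θ))
    (F' := fun x θ => -(Real.sin θ * Real.sin (x * Real.sin θ))) (by fun_prop) (by fun_prop)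
    (fun θ x => ?_) 1 (fun x θ => ?_) r
  · have := ((hasDerivAt_mul_const (Real.sin θ)).cos (x := x))
    convert this using 1; ring
  · rw [abs_neg, abs_mul]
    exact mul_le_one₀ (abs_sin_le θ) (abs_nonneg _) (abs_sin_le _)

lemma hasDerivAt_besselJ0' (r : ℝ) : HasDerivAt besselJ0' (besselJ0'' r) r := by
  rw [show besselJ0' = fun x => (1 / (2 * Real.pi)) *
      ∫ θ in (0:ℝ)..(2 * Real.pi), -(Real.sin θ * Real.sin (x * Real.sin θ)) from rfl, besselJ0'']
  refine HasDerivAt.const_mul _ ?_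
  refine hasDerivAt_parint (F := fun x θ => -(Real.sin θ * Real.sin (x * Real.sin θ)))
    (F' := fun x θ => -(Real.sin θ ^ 2 * Real.cos (x * Real.sin θ))) (by fun_prop) (by fun_prop)
    (fun θ x => ?_) 1 (fun x θ => ?_) r
  · have := (((hasDerivAt_mul_const (Real.sin θ)).sin (x := x)).const_mul (Real.sin θ)).neg
    exact this.congr_deriv (by ring)
  · rw [abs_neg, abs_mul]
    refine mul_le_one₀ ?_ (abs_nonneg _) (abs_cos_le _)
    rw [abs_pow]
    exact pow_le_one₀ (abs_nonneg _) (abs_sin_le θ)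

lemma besselJ0_zero : besselJ0 0 = 1 := by
  rw [besselJ0_eq]
  simp [Real.pi_ne_zero]
  field_simp

lemma besselJ0'_zero : besselJ0' 0 = 0 := by
  simp [besselJ0']

lemma bessel_ode (r : ℝ) :
    r * besselJ0'' r + besselJ0' r + r * besselJ0 r = 0 := by
  have cont1 : Continuous fun θ : ℝ => Real.cos (r * Real.sin θ) := by fun_prop
  have cont2 : Continuous fun θ : ℝ => Real.sin θ ^ 2 * Real.cos (r * Real.sin θ) := by fun_prop
  have cont3 : Continuous fun θ : ℝ => Real.sin θ * Real.sin (r * Real.sin θ) := by fun_prop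
  have ibp : (∫ θ in (0:ℝ)..(2*π),
      (Real.cos (r * Real.sin θ) * (r * Real.cos θ) * Real.cos θ +
        Real.sin (r * Real.sin θ) * (-Real.sin θ))) = 0 := by
    rw [intervalIntegral.integral_eq_sub_of_hasDerivAt
      (f := fun θ => Real.sin (r * Real.sin θ) * Real.cos θ)]
    · simp
    · intro θ _
      exact ((Real.hasDerivAt_sin θ |>.const_mul r).sin.mul (Real.hasDerivAt_cos θ))
    · exact (by fun_prop : Continuous fun θ : ℝ =>
        Real.cos (r * Real.sin θ) * (r * Real.cos θ) * Real.cos θ +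
        Real.sin (r * Real.sin θ) * (-Real.sin θ)).intervalIntegrable _ _
  have expand : (∫ θ in (0:ℝ)..(2*π),
      (Real.cos (r * Real.sin θ) * (r * Real.cos θ) * Real.cos θ +
        Real.sin (r * Real.sin θ) * (-Real.sin θ)))
      = r * (∫ θ in (0:ℝ)..(2*π), Real.cos (r * Real.sin θ))
        - r * (∫ θ in (0:ℝ)..(2*π), Real.sin θ ^ 2 * Real.cos (r * Real.sin θ))
        - (∫ θ in (0:ℝ)..(2*π), Real.sin θ * Real.sin (r * Real.sin θ)) := by
    rw [← intervalIntegral.integral_const_mul, ← intervalIntegral.integral_const_mul,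
      ← intervalIntegral.integral_sub, ← intervalIntegral.integral_sub]
    · apply intervalIntegral.integral_congr
      intro θ _
      have hcs : Real.cos θ ^ 2 = 1 - Real.sin θ ^ 2 := Real.cos_sq' θ
      dsimp only
      linear_combination r * Real.cos (r * Real.sin θ) * hcs
    · exact ((continuous_const.mul cont1).sub (continuous_const.mul cont2)).intervalIntegrable _ _
    · exact cont3.intervalIntegrable _ _
    · exact ((continuous_const.mul cont1)).intervalIntegrable _ _
    · exact ((continuous_const.mul cont2)).intervalIntegrable _ _
  have h1 : besselJ0' r = -((1 / (2 * Real.pi)) *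
      ∫ θ in (0:ℝ)..(2*π), Real.sin θ * Real.sin (r * Real.sin θ)) := by
    rw [besselJ0']
    rw [intervalIntegral.integral_neg]; ring
  have h2 : besselJ0'' r = -((1 / (2 * Real.pi)) *
      ∫ θ in (0:ℝ)..(2*π), Real.sin θ ^ 2 * Real.cos (r * Real.sin θ)) := by
    rw [besselJ0'']
    rw [intervalIntegral.integral_neg]; ring
  rw [h1, h2, besselJ0_eq]
  rw [expand] at ibp
  have hπ : (2 * Real.pi) ≠ 0 := by positivity
  linear_combination (1 / (2 * Real.pi)) * ibp

lemma iteratedDeriv_two (f : ℝ → ℝ) : iteratedDeriv 2 f = deriv (deriv f) := by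
  rw [show (2:ℕ) = 1+1 from rfl, iteratedDeriv_succ, iteratedDeriv_one]

/-- A `C²` radially symmetric solution of `Δg + g = 0` on the plane equals
`g(0) J_0(|z|)`. -/
theorem radial_helmholtz_eq_besselJ0 (g : ℝ × ℝ → ℝ) (hg : ContDiff ℝ 2 g)
    (hHelm : ∀ z, planeLaplacian g z + g z = 0)
    (h : ℝ → ℝ) (hrad : ∀ z, g z = h (euclidNorm z)) (hcont : ContinuousAt h 0) :
    ∀ z, g z = g 0 * besselJ0 (euclidNorm z) := by
  set H : ℝ → ℝ := fun t => g (t, 0) with hHdef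
  have hH : ContDiff ℝ 2 H := hg.comp (contDiff_id.prodMk contDiff_const)
  have hsplit := contDiff_succ_iff_deriv.mp (show ContDiff ℝ (1+1) H from by norm_num [hH])
  have hHd : Differentiable ℝ H := hsplit.1
  have hH1 : ContDiff ℝ 1 (deriv H) := hsplit.2.2
  have hH'd : Differentiable ℝ (deriv H) := (contDiff_one_iff_deriv.mp hH1).1
  -- H is even
  have hHeven : ∀ t, H (-t) = H t := by
    intro t
    simp only [hHdef]
    rw [hrad, hrad]
    norm_num [euclidNorm]
  -- deriv H 0 = 0
  have hH'0 : deriv H 0 = 0 := by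
    have h1 : HasDerivAt H (deriv H 0) 0 := (hHd 0).hasDerivAt
    have h1' : HasDerivAt H (deriv H 0) (-(0:ℝ)) := by simpa using h1
    have h2 : HasDerivAt (fun t => H (-t)) (deriv H 0 * (-1)) 0 :=
      h1'.comp 0 (hasDerivAt_neg 0)
    rw [funext hHeven] at h2
    have := h1.unique h2
    linarith
  -- H agrees with h on nonneg reals
  have hHh : ∀ r : ℝ, 0 ≤ r → H r = h r := by
    intro r hr
    simp only [hHdef]
    rw [hrad]
    congr 1
    simp [euclidNorm, Real.sqrt_sq hr]
  -- the radial ODE for H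
  have key : ∀ t : ℝ, 0 < t → deriv (deriv H) t + deriv H t / t + H t = 0 := by
    intro t ht
    have hHelm' := hHelm (t, 0)
    simp only [planeLaplacian] at hHelm'
    -- first term
    have e1 : iteratedDeriv 2 (fun s => g ((t, (0:ℝ)).1 + s, (t, (0:ℝ)).2)) 0
        = deriv (deriv H) t := by
      rw [iteratedDeriv_two]
      have d1 : deriv (fun s => H (t + s)) = fun s => deriv H (t + s) :=
        funext fun s => deriv_comp_const_add H t s
      show deriv (deriv fun s => H (t + s)) 0 = deriv (deriv H) t
      rw [d1]
      rw [deriv_comp_const_add (deriv H) t 0, add_zero]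
    -- second term: radial part
    set φ : ℝ → ℝ := fun s => Real.sqrt (t^2 + s^2) with hφdef
    have hφpos : ∀ s, 0 < φ s := fun s => Real.sqrt_pos.mpr (by positivity)
    have hφ0 : φ 0 = t := by simp [hφdef, Real.sqrt_sq ht.le]
    have hφ : ∀ s, HasDerivAt φ (s / φ s) s := by
      intro s
      have hin : HasDerivAt (fun s : ℝ => t^2 + s^2) (2*s) s := by
        simpa using ((hasDerivAt_pow 2 s).const_add (t^2))
      have := (Real.hasDerivAt_sqrt (by positivity : t^2 + s^2 ≠ 0)).comp s hin
      refine this.congr_deriv ?_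
      rw [hφdef]
      field_simp
    have e2fun : (fun s => g ((t, (0:ℝ)).1, (t, (0:ℝ)).2 + s)) = fun s => H (φ s) := by
      funext s
      show g (t, 0 + s) = H (φ s)
      rw [hrad, hHh (φ s) (hφpos s).le]
      congr 1
      simp [euclidNorm, hφdef]
    have e2 : iteratedDeriv 2 (fun s => g ((t, (0:ℝ)).1, (t, (0:ℝ)).2 + s)) 0
        = deriv H t / t := by
      rw [e2fun, iteratedDeriv_two]
      have d1 : deriv (fun s => H (φ s)) = fun s => deriv H (φ s) * (s / φ s) :=
        funext fun s => ((hHd (φ s)).hasDerivAt.comp s (hφ s)).deriv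
      rw [d1]
      have hu : HasDerivAt (fun s => deriv H (φ s)) (deriv (deriv H) (φ 0) * (0 / φ 0)) 0 :=
        (hH'd (φ 0)).hasDerivAt.comp 0 (hφ 0)
      have hv : HasDerivAt (fun s : ℝ => s / φ s)
          ((1 * φ 0 - 0 * (0 / φ 0)) / (φ 0)^2) 0 :=
        (hasDerivAt_id 0).div (hφ 0) (hφpos 0).ne'
      have := HasDerivAt.deriv (f := fun s => deriv H (φ s) * (s / φ s)) (hu.mul hv)
      rw [this, hφ0]
      field_simp
      ring
    rw [e1, e2] at hHelm'
    exact hHelm'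
  -- the difference function and energy
  set D : ℝ → ℝ := fun s => H s - H 0 * besselJ0 s with hDdef
  set D' : ℝ → ℝ := fun s => deriv H s - H 0 * besselJ0' s with hD'def
  have hD : ∀ s, HasDerivAt D (D' s) s := fun s =>
    (hHd s).hasDerivAt.sub ((hasDerivAt_besselJ0 s).const_mul (H 0))
  have hD' : ∀ s, HasDerivAt D' (deriv (deriv H) s - H 0 * besselJ0'' s) s := fun s =>
    (hH'd s).hasDerivAt.sub ((hasDerivAt_besselJ0' s).const_mul (H 0))
  have odeD : ∀ s : ℝ, 0 < s →
      deriv (deriv H) s - H 0 * besselJ0'' s = -(D' s / s) - D s := by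
    intro s hs
    have h1 := key s hs
    have h2 := bessel_ode s
    have h2' : besselJ0'' s + besselJ0' s / s + besselJ0 s = 0 := by
      field_simp at h2 ⊢
      linarith
    have h1' : deriv (deriv H) s * s + deriv H s + H s * s = 0 := by
      field_simp at h1
      linarith
    simp only [hD'def, hDdef]
    field_simp
    linear_combination h1' - H 0 * h2
  set E : ℝ → ℝ := fun s => D s ^ 2 + D' s ^ 2 with hEdef
  have hE : ∀ s, HasDerivAt E
      (2 * D s * D' s + 2 * D' s * (deriv (deriv H) s - H 0 * besselJ0'' s)) s := by
    intro s
    have := (((hD s).pow 2).add ((hD' s).pow 2) : HasDerivAt E _ s)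
    exact this.congr_deriv (by simp)
  have hEanti : AntitoneOn E (Set.Ici 0) := by
    apply antitoneOn_of_deriv_nonpos (convex_Ici 0)
    · exact Continuous.continuousOn (by
        have := fun s => (hE s).differentiableAt
        exact (Differentiable.continuous fun s => (hE s).differentiableAt))
    · intro s _
      exact ((hE s).differentiableAt).differentiableWithinAt
    · intro s hs
      rw [interior_Ici] at hs
      rw [(hE s).deriv, odeD s hs]
      have hD2 : 0 ≤ D' s ^ 2 := sq_nonneg _
      have : 2 * D s * D' s + 2 * D' s * (-(D' s / s) - D s) = -(2 * D' s ^ 2) / s := by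
        field_simp
        ring
      rw [this]
      apply div_nonpos_of_nonpos_of_nonneg (by nlinarith) (le_of_lt hs)
  have hE0 : E 0 = 0 := by
    simp only [hEdef, hDdef, hD'def]
    rw [besselJ0_zero, besselJ0'_zero, hH'0]
    ring
  have hDzero : ∀ r : ℝ, 0 ≤ r → D r = 0 := by
    intro r hr
    have h1 : E r ≤ E 0 := hEanti Set.self_mem_Ici hr hr
    rw [hE0] at h1
    have h2 : 0 ≤ D r ^ 2 := sq_nonneg _
    have h3 : 0 ≤ D' r ^ 2 := sq_nonneg _
    have : D r ^ 2 = 0 := by simp only [hEdef] at h1; linarith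
    exact (pow_eq_zero_iff two_ne_zero).mp this
  -- conclusion
  intro z
  have hr0 : 0 ≤ euclidNorm z := Real.sqrt_nonneg _
  have hg0 : g 0 = H 0 := rfl
  have := hDzero (euclidNorm z) hr0
  simp only [hDdef] at this
  rw [hrad z, ← hHh (euclidNorm z) hr0, hg0]
  linarith
end

section
/- Let f : ℝ² → ℝ be a C² solution of Δf + f = 0, let x ∈ ℝ², and let r ∈ (r₁, r₂) where r₁ < r₂ are the first two positive zeros of the Bessel function J_0. Suppose f(x) > 0 and f does not vanish on the circle {z : |z − x| = r}. Then f(z) < 0 for all z with |z − x| = r. -/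
open MeasureTheory Real

open Topology Filter

set_option linter.unusedVariables false

section slice
variable {f : ℝ × ℝ → ℝ}

lemma line_hasDerivAt (hf : ContDiff ℝ 2 f) (z v : ℝ × ℝ) (s : ℝ) :
    HasDerivAt (fun t : ℝ => f (z + t • v)) (fderiv ℝ f (z + s • v) v) s := by
  have hline : HasDerivAt (fun t : ℝ => z + t • v) v s := by
    simpa using ((hasDerivAt_id s).smul_const v).const_add z
  exact ((hf.differentiable (by norm_num)) (z + s • v)).hasFDerivAt.comp_hasDerivAt s hline

lemma hf1 (hf : ContDiff ℝ 2 f) : ContDiff ℝ 1 (fderiv ℝ f) := hf.fderiv_right (by norm_num)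

lemma line2_hasDerivAt (hf : ContDiff ℝ 2 f) (z v w : ℝ × ℝ) (s : ℝ) :
    HasDerivAt (fun t : ℝ => fderiv ℝ f (z + t • v) w)
      (fderiv ℝ (fderiv ℝ f) (z + s • v) v w) s := by
  have hline : HasDerivAt (fun t : ℝ => z + t • v) v s := by
    simpa using ((hasDerivAt_id s).smul_const v).const_add z
  have h1 : HasDerivAt (fun t : ℝ => fderiv ℝ f (z + t • v))
      (fderiv ℝ (fderiv ℝ f) (z + s • v) v) s :=
    (((hf1 hf).differentiable (by norm_num)) (z + s • v)).hasFDerivAt.comp_hasDerivAt s hline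
  simpa using h1.clm_apply (hasDerivAt_const s w)

lemma lap_eq (hf : ContDiff ℝ 2 f) (z : ℝ × ℝ) :
    planeLaplacian f z = fderiv ℝ (fderiv ℝ f) z (1,0) (1,0)
      + fderiv ℝ (fderiv ℝ f) z (0,1) (0,1) := by
  have key : ∀ v : ℝ × ℝ, iteratedDeriv 2 (fun t : ℝ => f (z + t • v)) 0
      = fderiv ℝ (fderiv ℝ f) z v v := by
    intro v
    rw [iteratedDeriv_succ, iteratedDeriv_one]
    have h1 : deriv (fun t : ℝ => f (z + t • v)) = fun t => fderiv ℝ f (z + t • v) v :=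
      funext fun t => (line_hasDerivAt hf z v t).deriv
    rw [h1]
    have := (line2_hasDerivAt hf z v v 0).deriv
    simpa using this
  have e1 : (fun t : ℝ => f (z.1 + t, z.2)) = fun t : ℝ => f (z + t • ((1:ℝ),(0:ℝ))) := by
    funext t; congr 1; ext <;> simp
  have e2 : (fun t : ℝ => f (z.1, z.2 + t)) = fun t : ℝ => f (z + t • ((0:ℝ),(1:ℝ))) := by
    funext t; congr 1; ext <;> simp
  rw [planeLaplacian, e1, e2, key, key]

end slice

lemma trace_rot (A : ℝ × ℝ →L[ℝ] (ℝ × ℝ →L[ℝ] ℝ)) (θ : ℝ) :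
    A (cos θ, sin θ) (cos θ, sin θ) + A (-sin θ, cos θ) (-sin θ, cos θ)
      = A (1,0) (1,0) + A (0,1) (0,1) := by
  have h : ∀ a b : ℝ, ((a,b) : ℝ × ℝ) = a • ((1:ℝ),(0:ℝ)) + b • ((0:ℝ),(1:ℝ)) := by
    intro a b; ext <;> simp
  rw [h (cos θ) (sin θ), h (-sin θ) (cos θ)]
  simp only [map_add, _root_.map_smul, ContinuousLinearMap.add_apply,
    ContinuousLinearMap.smul_apply, smul_eq_mul]
  linear_combination ((A (1,0)) (1,0) + (A (0,1)) (0,1)) * sin_sq_add_cos_sq θ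

open intervalIntegral in
/-- Differentiation under the interval integral for jointly continuous data. -/
lemma hasDerivAt_param (F F' : ℝ → ℝ → ℝ) (s₀ : ℝ)
    (hdF : ∀ s θ, HasDerivAt (fun u => F u θ) (F' s θ) s)
    (hFc : Continuous fun p : ℝ × ℝ => F p.1 p.2)
    (hF'c : Continuous fun p : ℝ × ℝ => F' p.1 p.2) :
    HasDerivAt (fun s => ∫ θ in (0:ℝ)..(2*π), F s θ) (∫ θ in (0:ℝ)..(2*π), F' s₀ θ) s₀ := by
  obtain ⟨C, hC⟩ : ∃ C, ∀ p ∈ (Set.Icc (s₀-1) (s₀+1) ×ˢ Set.Icc (0:ℝ) (2*π)),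
      ‖F' p.1 p.2‖ ≤ C := by
    obtain ⟨C, hC⟩ := (IsCompact.exists_bound_of_continuousOn
      ((isCompact_Icc.prod isCompact_Icc)) hF'c.continuousOn)
    exact ⟨C, hC⟩
  have key := intervalIntegral.hasDerivAt_integral_of_dominated_loc_of_deriv_le
    (F := F) (F' := F') (x₀ := s₀) (a := 0) (b := 2*π) (μ := volume)
    (bound := fun _ => C) (Metric.ball_mem_nhds s₀ one_pos)
    (Filter.Eventually.of_forall fun s =>
      ((hFc.comp (Continuous.prodMk_right s)).aestronglyMeasurable))
    ((hFc.comp (Continuous.prodMk_right s₀)).intervalIntegrable (0:ℝ) (2*π))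
    ((hF'c.comp (Continuous.prodMk_right s₀)).aestronglyMeasurable)
    (Filter.Eventually.of_forall fun θ hθ s hs => by
      refine hC (s, θ) ⟨?_, ?_⟩
      · have := Metric.mem_ball.mp hs
        constructor <;> [linarith [abs_lt.mp (by simpa [Real.dist_eq] using this)];
          linarith [abs_lt.mp (by simpa [Real.dist_eq] using this)]]
      · have : θ ∈ Set.Ioc (0:ℝ) (2*π) := by
          simpa [Set.uIoc_of_le (by positivity : (0:ℝ) ≤ 2*π)] using hθ
        exact ⟨this.1.le, this.2⟩)
    (intervalIntegrable_const)
    (Filter.Eventually.of_forall fun θ _ s _ => hdF s θ)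
  exact key.2

lemma circ_ode (f : ℝ × ℝ → ℝ) (hf : ContDiff ℝ 2 f)
    (hHelm : ∀ z, planeLaplacian f z + f z = 0) (x : ℝ × ℝ) :
    ∃ G G1 G2 : ℝ → ℝ,
      (∀ s, G s = ∫ θ in (0:ℝ)..(2*π), f (x + s • (cos θ, sin θ))) ∧
      (∀ s, HasDerivAt G (G1 s) s) ∧
      (∀ s, HasDerivAt G1 (G2 s) s) ∧
      G1 0 = 0 ∧
      (∀ s, s ≠ 0 → s * G2 s + G1 s + s * G s = 0) := by
  have f1d := (hf1 hf).differentiable (by norm_num)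
  have f1c := (hf1 hf).continuous
  have f2c : Continuous (fderiv ℝ (fderiv ℝ f)) :=
    ((hf1 hf).fderiv_right (m := 0) (by norm_num)).continuous
  set e : ℝ → ℝ × ℝ := fun θ => (cos θ, sin θ) with he
  set e' : ℝ → ℝ × ℝ := fun θ => (-sin θ, cos θ) with he'
  have ec : Continuous e := continuous_cos.prodMk continuous_sin
  have e'c : Continuous e' := continuous_sin.neg.prodMk continuous_cos
  set P : ℝ → ℝ → ℝ × ℝ := fun s θ => x + s • e θ with hP
  have Pc : Continuous fun p : ℝ × ℝ => P p.1 p.2 :=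
    continuous_const.add (continuous_fst.smul (ec.comp continuous_snd))
  set F0 : ℝ → ℝ → ℝ := fun s θ => f (P s θ) with hF0
  set F1 : ℝ → ℝ → ℝ := fun s θ => fderiv ℝ f (P s θ) (e θ) with hF1
  set F2 : ℝ → ℝ → ℝ := fun s θ => fderiv ℝ (fderiv ℝ f) (P s θ) (e θ) (e θ) with hF2
  set Fp : ℝ → ℝ → ℝ := fun s θ => fderiv ℝ (fderiv ℝ f) (P s θ) (e' θ) (e' θ) with hFp
  have c0 : Continuous fun p : ℝ × ℝ => F0 p.1 p.2 := hf.continuous.comp Pc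
  have c1 : Continuous fun p : ℝ × ℝ => F1 p.1 p.2 :=
    (f1c.comp Pc).clm_apply (ec.comp continuous_snd)
  have c2 : Continuous fun p : ℝ × ℝ => F2 p.1 p.2 :=
    ((f2c.comp Pc).clm_apply (ec.comp continuous_snd)).clm_apply (ec.comp continuous_snd)
  have cp : Continuous fun p : ℝ × ℝ => Fp p.1 p.2 :=
    ((f2c.comp Pc).clm_apply (e'c.comp continuous_snd)).clm_apply (e'c.comp continuous_snd)
  refine ⟨fun s => ∫ θ in (0:ℝ)..(2*π), F0 s θ, fun s => ∫ θ in (0:ℝ)..(2*π), F1 s θ,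
    fun s => ∫ θ in (0:ℝ)..(2*π), F2 s θ, fun s => rfl, ?_, ?_, ?_, ?_⟩
  · intro s
    exact hasDerivAt_param F0 F1 s (fun s θ => line_hasDerivAt hf x (e θ) s) c0 c1
  · intro s
    exact hasDerivAt_param F1 F2 s (fun s θ => line2_hasDerivAt hf x (e θ) (e θ) s) c1 c2
  · -- G1 0 = 0
    have hrw : (fun θ => F1 0 θ) =
        fun θ => cos θ * (fderiv ℝ f x (1,0)) + sin θ * (fderiv ℝ f x (0,1)) := by
      funext θ
      have hxe : P 0 θ = x := by simp [hP]
      have hdec : e θ = cos θ • ((1:ℝ),(0:ℝ)) + sin θ • ((0:ℝ),(1:ℝ)) := by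
        ext <;> simp [he]
      show (fderiv ℝ f (P 0 θ)) (e θ) = _
      rw [hxe, hdec, map_add, _root_.map_smul, _root_.map_smul]
      simp [smul_eq_mul]
    simp only [hrw]
    rw [intervalIntegral.integral_add (f := fun θ => cos θ * (fderiv ℝ f x (1,0)))
        (g := fun θ => sin θ * (fderiv ℝ f x (0,1)))
        ((continuous_cos.mul continuous_const).intervalIntegrable (0:ℝ) (2*π))
        ((continuous_sin.mul continuous_const).intervalIntegrable (0:ℝ) (2*π)),
      intervalIntegral.integral_mul_const, intervalIntegral.integral_mul_const,
      integral_cos, integral_sin]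
    simp
  · -- the ODE
    intro s hs
    have cθ0 : Continuous fun θ => F0 s θ := c0.comp (continuous_const.prodMk continuous_id)
    have cθ1 : Continuous fun θ => F1 s θ := c1.comp (continuous_const.prodMk continuous_id)
    have cθ2 : Continuous fun θ => F2 s θ := c2.comp (continuous_const.prodMk continuous_id)
    have cθp : Continuous fun θ => Fp s θ := cp.comp (continuous_const.prodMk continuous_id)
    -- angular integration by parts
    have key : ∫ θ in (0:ℝ)..(2*π), (s * Fp s θ - F1 s θ) = 0 := by
      have hq : ∀ θ ∈ Set.uIcc (0:ℝ) (2*π),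
          HasDerivAt (fun θ => fderiv ℝ f (P s θ) (e' θ)) (s * Fp s θ - F1 s θ) θ := by
        intro θ _
        have hee : HasDerivAt e (e' θ) θ :=
          (Real.hasDerivAt_cos θ).prodMk (Real.hasDerivAt_sin θ)
        have hc : HasDerivAt (fun θ => P s θ) (s • e' θ) θ :=
          (hee.const_smul s).const_add x
        have hFd : HasDerivAt (fun θ => fderiv ℝ f (P s θ))
            (fderiv ℝ (fderiv ℝ f) (P s θ) (s • e' θ)) θ :=
          (f1d (P s θ)).hasFDerivAt.comp_hasDerivAt θ hc
        have hu : HasDerivAt e' ((-cos θ, -sin θ) : ℝ × ℝ) θ :=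
          ((Real.hasDerivAt_sin θ).neg).prodMk (Real.hasDerivAt_cos θ)
        have hcomb := hFd.clm_apply hu
        refine hcomb.congr_deriv (Eq.symm ?_)
        have h2 : ((-cos θ, -sin θ) : ℝ × ℝ) = -(e θ) := by ext <;> simp [he]
        rw [h2]
        show s * ((fderiv ℝ (fderiv ℝ f) (P s θ)) (e' θ)) (e' θ)
            - (fderiv ℝ f (P s θ)) (e θ) = _
        rw [_root_.map_smul, map_neg]
        simp only [ContinuousLinearMap.smul_apply, smul_eq_mul]
        ring
      rw [intervalIntegral.integral_eq_sub_of_hasDerivAt hq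
          (((continuous_const.mul cθp).sub cθ1).intervalIntegrable (0:ℝ) (2*π))]
      have h2π : P s (2*π) = P s 0 ∧ e' (2*π) = e' 0 := by
        constructor
        · simp [hP, he]
        · simp [he']
      rw [h2π.1, h2π.2]
      ring
    -- laplacian identity pointwise
    have lap : ∀ θ, F2 s θ + Fp s θ = -F0 s θ := by
      intro θ
      have h1 : F2 s θ + Fp s θ = planeLaplacian f (P s θ) := by
        rw [hF2, hFp, lap_eq hf, he, he']
        exact trace_rot _ θ
      rw [h1]
      have := hHelm (P s θ)
      rw [hF0]; linarith
    -- conclude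
    have hsub : ∫ θ in (0:ℝ)..(2*π), (s * Fp s θ - F1 s θ)
        = (∫ θ in (0:ℝ)..(2*π), s * Fp s θ) - ∫ θ in (0:ℝ)..(2*π), F1 s θ :=
      intervalIntegral.integral_sub
        ((continuous_const.mul cθp).intervalIntegrable (0:ℝ) (2*π))
        (cθ1.intervalIntegrable (0:ℝ) (2*π))
    rw [hsub] at key
    have hmul : ∫ θ in (0:ℝ)..(2*π), s * Fp s θ = s * ∫ θ in (0:ℝ)..(2*π), Fp s θ :=
      intervalIntegral.integral_const_mul _ _
    have e1 : ∫ θ in (0:ℝ)..(2*π), F1 s θ = s * ∫ θ in (0:ℝ)..(2*π), Fp s θ := by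
      rw [← hmul]; linarith [key]
    have e2 : (∫ θ in (0:ℝ)..(2*π), F2 s θ) + (∫ θ in (0:ℝ)..(2*π), Fp s θ)
        = -∫ θ in (0:ℝ)..(2*π), F0 s θ := by
      rw [← intervalIntegral.integral_add (cθ2.intervalIntegrable (0:ℝ) (2*π))
        (cθp.intervalIntegrable (0:ℝ) (2*π)), ← intervalIntegral.integral_neg]
      exact intervalIntegral.integral_congr fun θ _ => lap θ
    show s * (∫ θ in (0:ℝ)..(2*π), F2 s θ) + (∫ θ in (0:ℝ)..(2*π), F1 s θ)
        + s * (∫ θ in (0:ℝ)..(2*π), F0 s θ) = 0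
    rw [e1]
    linear_combination s * e2

/-- Energy uniqueness: a solution of `s w'' + w' + s w = 0` on `(a, ∞)`, `a ≥ 0`,
with `w a = w' a = 0`, vanishes on `[a, b]`. -/
lemma ode_vanish (w w1 w2 : ℝ → ℝ) (a b : ℝ) (ha : 0 ≤ a) (hab : a ≤ b)
    (hw : ∀ s, HasDerivAt w (w1 s) s) (hw1 : ∀ s, HasDerivAt w1 (w2 s) s)
    (hode : ∀ s, a < s → s * w2 s + w1 s + s * w s = 0)
    (h0 : w a = 0) (h0' : w1 a = 0) : ∀ s ∈ Set.Icc a b, w s = 0 := by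
  set E : ℝ → ℝ := fun s => w1 s * w1 s + w s * w s with hE
  have hdE : ∀ s, HasDerivAt E (w2 s * w1 s + w1 s * w2 s + (w1 s * w s + w s * w1 s)) s :=
    fun s => ((hw1 s).mul (hw1 s)).add ((hw s).mul (hw s))
  have hanti : AntitoneOn E (Set.Icc a b) := by
    apply antitoneOn_of_deriv_nonpos (convex_Icc a b)
    · exact (continuous_iff_continuousAt.mpr fun t => (hdE t).continuousAt).continuousOn
    · intro t _
      exact (hdE t).differentiableAt.differentiableWithinAt
    · intro t ht
      rw [interior_Icc] at ht
      have hta : a < t := ht.1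
      have htpos : 0 < t := lt_of_le_of_lt ha hta
      rw [(hdE t).deriv]
      have hodet := hode t hta
      have key : t * (w2 t * w1 t + w1 t * w2 t + (w1 t * w t + w t * w1 t))
          = -2 * (w1 t)^2 := by linear_combination (2 * w1 t) * hodet
      nlinarith [sq_nonneg (w1 t)]
  intro s hs
  have hEa : E a = 0 := by simp [hE, h0, h0']
  have hEs : E s ≤ 0 := by
    have := hanti (Set.left_mem_Icc.mpr hab) hs hs.1
    rwa [hEa] at this
  have hEs' : w1 s * w1 s + w s * w s ≤ 0 := hEs
  have h1 : w s * w s ≤ 0 := by nlinarith [mul_self_nonneg (w1 s)]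
  exact mul_self_eq_zero.mp (le_antisymm h1 (mul_self_nonneg (w s)))

lemma besselJ0_eq_s10 (s : ℝ) :
    besselJ0 s = (1/(2*π)) * ∫ θ in (0:ℝ)..(2*π), cos (s * sin θ) := by
  have hint : (∫ θ in (0:ℝ)..(2*π), Complex.exp (Complex.I * (s : ℂ) * (Real.sin θ : ℂ)))
      = ((∫ θ in (0:ℝ)..(2*π), cos (s * sin θ) : ℝ) : ℂ)
        + ((∫ θ in (0:ℝ)..(2*π), Real.sin (s * sin θ) : ℝ) : ℂ) * Complex.I := by
    have h1 : ∀ θ : ℝ, Complex.exp (Complex.I * (s : ℂ) * (Real.sin θ : ℂ))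
        = ((cos (s * sin θ) : ℝ) : ℂ) + ((Real.sin (s * sin θ) : ℝ) : ℂ) * Complex.I := by
      intro θ
      rw [show Complex.I * (s : ℂ) * (Real.sin θ : ℂ) = ((s * Real.sin θ : ℝ) : ℂ) * Complex.I
        by push_cast; ring, Complex.exp_mul_I, Complex.ofReal_cos, Complex.ofReal_sin]
    simp only [h1]
    rw [intervalIntegral.integral_add, intervalIntegral.integral_mul_const,
      intervalIntegral.integral_ofReal, intervalIntegral.integral_ofReal]
    · exact (Complex.continuous_ofReal.comp
        (Real.continuous_cos.comp (continuous_const.mul continuous_sin))).intervalIntegrable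
          (0:ℝ) (2*π)
    · exact ((Complex.continuous_ofReal.comp
        (Real.continuous_sin.comp (continuous_const.mul continuous_sin))).mul
          continuous_const).intervalIntegrable (0:ℝ) (2*π)
  rw [besselJ0, hint]
  have : (1 / (2 * (Real.pi : ℂ))) = (((1 / (2*π) : ℝ)) : ℂ) := by push_cast; ring
  rw [this]
  simp [Complex.add_re, Complex.mul_re, Complex.ofReal_re, Complex.ofReal_im,
    Complex.I_re, Complex.I_im, Complex.mul_im]

lemma contDiff_fc : ContDiff ℝ 2 (fun z : ℝ × ℝ => cos z.2) :=
  Real.contDiff_cos.comp contDiff_snd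

lemma helm_fc : ∀ z, planeLaplacian (fun z : ℝ × ℝ => cos z.2) z
    + (fun z : ℝ × ℝ => cos z.2) z = 0 := by
  intro z
  have h1 : iteratedDeriv 2 (fun _ : ℝ => cos z.2) 0 = 0 := by
    rw [iteratedDeriv_succ, iteratedDeriv_one]
    simp
  have d1 : deriv (fun t : ℝ => cos (z.2 + t)) = fun t => -sin (z.2 + t) := by
    funext t
    exact (((Real.hasDerivAt_cos (z.2 + t)).comp t
      ((hasDerivAt_id t).const_add z.2)).congr_deriv (by ring)).deriv
  have d2 : deriv (fun t : ℝ => -sin (z.2 + t)) = fun t => -cos (z.2 + t) := by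
    funext t
    exact ((((Real.hasDerivAt_sin (z.2 + t)).comp t
      ((hasDerivAt_id t).const_add z.2)).neg).congr_deriv (by ring)).deriv
  have h2 : iteratedDeriv 2 (fun t : ℝ => cos (z.2 + t)) 0 = -cos z.2 := by
    rw [iteratedDeriv_succ, iteratedDeriv_one, d1, d2]
    simp
  simp only [planeLaplacian]
  rw [show (fun t : ℝ => (fun z : ℝ × ℝ => cos z.2) (z.1 + t, z.2)) = fun _ : ℝ => cos z.2
      from rfl,
    show (fun t : ℝ => (fun z : ℝ × ℝ => cos z.2) (z.1, z.2 + t)) = fun t : ℝ => cos (z.2 + t)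
      from rfl, h1, h2]
  ring

lemma pos_of_ne_zero_circ {φ : ℝ → ℝ} (hc : Continuous φ) (hne : ∀ θ, φ θ ≠ 0) {θ₀ : ℝ}
    (h0 : 0 < φ θ₀) (θ : ℝ) : 0 < φ θ := by
  by_contra h
  push_neg at h
  have hneg : φ θ < 0 := lt_of_le_of_ne h (hne θ)
  rcases le_total θ θ₀ with h1 | h1
  · obtain ⟨c, _, hc0⟩ := intermediate_value_Ioo h1 hc.continuousOn
      (Set.mem_Ioo.mpr ⟨hneg, h0⟩)
    exact hne c hc0
  · obtain ⟨c, _, hc0⟩ := intermediate_value_Ioo' h1 hc.continuousOn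
      (Set.mem_Ioo.mpr ⟨hneg, h0⟩)
    exact hne c hc0

/-- If `f` is a `C²` solution of `Δf + f = 0`, `r` lies strictly between the first
two positive zeros of `J_0`, `f(x) > 0`, and `f` does not vanish on the circle of
radius `r` about `x`, then `f < 0` on that circle. -/
theorem negative_on_circle (f : ℝ × ℝ → ℝ) (hf : ContDiff ℝ 2 f)
    (hHelm : ∀ z, planeLaplacian f z + f z = 0)
    (r₁ r₂ : ℝ) (h₁ : 0 < r₁) (h₁₂ : r₁ < r₂)
    (hz₁ : besselJ0 r₁ = 0) (hz₂ : besselJ0 r₂ = 0)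
    (hfirst : ∀ s, 0 < s → s < r₁ → besselJ0 s ≠ 0)
    (hsecond : ∀ s, r₁ < s → s < r₂ → besselJ0 s ≠ 0)
    (r : ℝ) (hr : r ∈ Set.Ioo r₁ r₂)
    (x : ℝ × ℝ) (hx : 0 < f x)
    (hnv : ∀ z, euclidNorm (z - x) = r → f z ≠ 0) :
    ∀ z, euclidNorm (z - x) = r → f z < 0 := by
  have hπ : (0:ℝ) < π := pi_pos
  have h2π : (2*π) ≠ 0 := by positivity
  have hrpos : 0 < r := h₁.trans hr.1
  obtain ⟨G, G1, G2, hGeq, hG, hG1, hG10, hGode⟩ := circ_ode f hf hHelm x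
  obtain ⟨HB, HB1, HB2, hHeq, hH, hH1, hH10, hHode⟩ :=
    circ_ode (fun z : ℝ × ℝ => cos z.2) contDiff_fc helm_fc 0
  have hHBeq : ∀ s, HB s = ∫ θ in (0:ℝ)..(2*π), cos (s * sin θ) := by
    intro s
    rw [hHeq s]
    apply intervalIntegral.integral_congr
    intro θ _
    simp
  have hbes : ∀ s, besselJ0 s = (1/(2*π)) * HB s := by
    intro s; rw [besselJ0_eq_s10 s, hHBeq s]
  have hJfun : besselJ0 = fun s => (1/(2*π)) * HB s := funext hbes
  have hβd : ∀ s, HasDerivAt besselJ0 ((1/(2*π)) * HB1 s) s := by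
    intro s; rw [hJfun]; exact (hH s).const_mul _
  have hJcont : Continuous besselJ0 :=
    (Differentiable.continuous fun s => (hβd s).differentiableAt)
  have hHB0 : HB 0 = 2*π := by
    rw [hHBeq 0]
    simp [intervalIntegral.integral_const]
  have hJ00 : besselJ0 0 = 1 := by
    rw [hbes 0, hHB0]; field_simp
  -- J positive before the first zero
  have hJpos : ∀ s, 0 ≤ s → s < r₁ → 0 < besselJ0 s := by
    intro s hs hsr
    rcases eq_or_lt_of_le hs with h | h
    · rw [← h, hJ00]; norm_num
    · by_contra hcon
      push_neg at hcon
      have hneg : besselJ0 s < 0 := lt_of_le_of_ne hcon (hfirst s h hsr)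
      obtain ⟨c, hcmem, hc0⟩ := intermediate_value_Ioo' hs hJcont.continuousOn
        (Set.mem_Ioo.mpr (by rw [hJ00]; exact ⟨hneg, one_pos⟩))
      exact hfirst c hcmem.1 (hcmem.2.trans hsr) hc0
  -- derivative of J at r₁ is nonpositive
  set d₁ : ℝ := (1/(2*π)) * HB1 r₁ with hd₁
  have hd1le : d₁ ≤ 0 := by
    have htend : Filter.Tendsto (slope besselJ0 r₁) (𝓝[<] r₁) (𝓝 d₁) :=
      (hasDerivAt_iff_tendsto_slope.mp (hβd r₁)).mono_left
        (nhdsWithin_mono _ fun y hy => ne_of_lt hy)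
    refine le_of_tendsto htend ?_
    filter_upwards [Ioo_mem_nhdsLT_of_mem (Set.mem_Ioc.mpr ⟨h₁, le_rfl⟩)] with y hy
    rw [slope_def_field, hz₁]
    apply div_nonpos_of_nonneg_of_nonpos
    · simpa using (hJpos y hy.1.le hy.2).le
    · linarith [hy.2]
  -- derivative of J at r₁ is nonzero (else J ≡ 0 past r₁)
  have hHBr₁ : HB r₁ = 0 := by
    have := hbes r₁
    rw [hz₁] at this
    field_simp at this
    linarith
  have hd1ne : d₁ ≠ 0 := by
    intro hzero
    have hHB1r₁ : HB1 r₁ = 0 := by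
      rw [hd₁] at hzero
      field_simp at hzero
      linarith
    have hvan := ode_vanish HB HB1 HB2 r₁ r h₁.le hr.1.le hH hH1
      (fun s hs => hHode s (ne_of_gt (h₁.trans hs))) hHBr₁ hHB1r₁
    have : HB r = 0 := hvan r ⟨hr.1.le, le_rfl⟩
    have : besselJ0 r = 0 := by rw [hbes r, this]; ring
    exact hsecond r hr.1 hr.2 this
  have hd1neg : d₁ < 0 := lt_of_le_of_ne hd1le hd1ne
  -- J is negative somewhere in (r₁, r)
  obtain ⟨s₀, hs₀slope, hs₀mem⟩ :
      ∃ s₀, slope besselJ0 r₁ s₀ < 0 ∧ s₀ ∈ Set.Ioo r₁ r := by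
    have htend : Filter.Tendsto (slope besselJ0 r₁) (𝓝[>] r₁) (𝓝 d₁) :=
      (hasDerivAt_iff_tendsto_slope.mp (hβd r₁)).mono_left
        (nhdsWithin_mono _ fun y hy => ne_of_gt hy)
    have h5 := htend.eventually_lt_const hd1neg
    have hmem : Set.Ioo r₁ r ∈ 𝓝[>] r₁ :=
      Ioo_mem_nhdsGT_of_mem (Set.mem_Ico.mpr ⟨le_rfl, hr.1⟩)
    exact (h5.and (Filter.eventually_of_mem hmem fun y hy => hy)).exists
  have hJs₀ : besselJ0 s₀ < 0 := by
    rw [slope_def_field, hz₁] at hs₀slope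
    by_contra hcon
    push_neg at hcon
    have : 0 ≤ (besselJ0 s₀ - 0) / (s₀ - r₁) :=
      div_nonneg (by linarith) (by linarith [hs₀mem.1])
    linarith
  -- J is negative at r
  have hJr : besselJ0 r < 0 := by
    by_contra hcon
    push_neg at hcon
    have hne := hsecond r hr.1 hr.2
    have hpos : 0 < besselJ0 r := lt_of_le_of_ne hcon (Ne.symm hne)
    obtain ⟨c, hcmem, hc0⟩ := intermediate_value_Ioo hs₀mem.2.le hJcont.continuousOn
      (Set.mem_Ioo.mpr ⟨hJs₀, hpos⟩)
    exact hsecond c (hs₀mem.1.trans hcmem.1) (hcmem.2.trans hr.2) hc0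
  -- the mean value property: G r = f x * HB r
  have hG0 : G 0 = 2*π * f x := by
    rw [hGeq 0]
    simp [intervalIntegral.integral_const]
    try ring
  have hwr : G r - f x * HB r = 0 := by
    have hvan := ode_vanish (fun s => G s - f x * HB s) (fun s => G1 s - f x * HB1 s)
      (fun s => G2 s - f x * HB2 s) 0 r le_rfl hrpos.le
      (fun s => (hG s).sub ((hH s).const_mul (f x)))
      (fun s => (hG1 s).sub ((hH1 s).const_mul (f x)))
      (fun s hs => by
        have ha := hGode s (ne_of_gt hs)
        have hb := hHode s (ne_of_gt hs)
        linear_combination ha - f x * hb)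
      (by simp [hG0, hHB0]; ring)
      (by simp [hG10, hH10])
    exact hvan r ⟨hrpos.le, le_rfl⟩
  have hHBr : HB r = 2*π * besselJ0 r := by
    rw [hbes r]; field_simp
  have hGrneg : G r < 0 := by
    have h1 : G r = f x * (2*π * besselJ0 r) := by rw [← hHBr]; linarith
    have h2 : 2*π * besselJ0 r < 0 := by nlinarith
    rw [h1]
    exact mul_neg_of_pos_of_neg hx h2
  -- conclude on the circle
  intro z hz
  have hfz := hnv z hz
  rcases lt_trichotomy (f z) 0 with h | h | h
  · exact h
  · exact absurd h hfz
  · exfalso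
    set v : ℝ × ℝ := z - x with hv
    have hnorm : Real.sqrt (v.1^2 + v.2^2) = r := hz
    set c : ℂ := ⟨v.1, v.2⟩ with hc
    have habs : ‖c‖ = r := by
      rw [Complex.norm_def, Complex.normSq_mk]
      rw [show v.1 * v.1 + v.2 * v.2 = v.1^2 + v.2^2 by ring]
      exact hnorm
    have hc0 : c ≠ 0 := by
      intro hcz
      rw [hcz] at habs
      simp at habs
      linarith
    set θ₀ : ℝ := Complex.arg c with hθ₀
    have hcos : cos θ₀ = v.1 / r := by
      rw [hθ₀, Complex.cos_arg hc0, habs]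
    have hsin : sin θ₀ = v.2 / r := by
      rw [hθ₀, Complex.sin_arg, habs]
    have hzeq : z = x + r • (cos θ₀, sin θ₀) := by
      have h1 : v = r • ((cos θ₀, sin θ₀) : ℝ × ℝ) := by
        ext
        · show v.1 = r * cos θ₀
          rw [hcos]; field_simp
        · show v.2 = r * sin θ₀
          rw [hsin]; field_simp
      have : z = x + v := by rw [hv]; abel
      rw [this, h1]
    set φ : ℝ → ℝ := fun θ => f (x + r • (cos θ, sin θ)) with hφ
    have hφcont : Continuous φ :=
      hf.continuous.comp (continuous_const.add
        ((continuous_cos.prodMk continuous_sin).const_smul r))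
    have hcircle : ∀ θ, euclidNorm ((x + r • ((cos θ, sin θ) : ℝ × ℝ)) - x) = r := by
      intro θ
      rw [add_sub_cancel_left]
      show Real.sqrt ((r • ((cos θ, sin θ) : ℝ × ℝ)).1 ^ 2 + (r • ((cos θ, sin θ) : ℝ × ℝ)).2 ^ 2) = r
      have h1 : (r • ((cos θ, sin θ) : ℝ × ℝ)).1 = r * cos θ := rfl
      have h2 : (r • ((cos θ, sin θ) : ℝ × ℝ)).2 = r * sin θ := rfl
      rw [h1, h2, show (r * cos θ)^2 + (r * sin θ)^2 = r^2 by
        linear_combination r^2 * (sin_sq_add_cos_sq θ)]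
      exact Real.sqrt_sq hrpos.le
    have hφne : ∀ θ, φ θ ≠ 0 := fun θ => hnv _ (hcircle θ)
    have hφθ₀ : 0 < φ θ₀ := by
      rw [hφ]
      show 0 < f (x + r • (cos θ₀, sin θ₀))
      rw [← hzeq]
      exact h
    have hφpos : ∀ θ, 0 < φ θ := pos_of_ne_zero_circ hφcont hφne hφθ₀
    have hGpos : 0 < G r := by
      rw [hGeq r]
      exact intervalIntegral.intervalIntegral_pos_of_pos_on
        (hφcont.intervalIntegrable (0:ℝ) (2*π)) (fun θ _ => hφpos θ) (by positivity)
    linarith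
end

section
/- Let f : ℝ² → ℝ be a continuous solution of Δf + f = 0 (in particular f is smooth), let r ∈ (r₁, r₂) where r₁, r₂ are the first two positive zeros of J_0, and let x ∈ ℝ² with f(x) ≠ 0 and f nonvanishing on the circle of radius r centered at x. Then the connected component of x in {z : f(z) ≠ 0} is contained in the open ball B(x, r). -/
open MeasureTheory Real

namespace CompInBall

noncomputable def pt (x : ℝ × ℝ) (s θ : ℝ) : ℝ × ℝ :=
  (x.1 + s * Real.cos θ, x.2 + s * Real.sin θ)

noncomputable def uvec (θ : ℝ) : ℝ × ℝ := (Real.cos θ, Real.sin θ)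
noncomputable def vvec (θ : ℝ) : ℝ × ℝ := (-Real.sin θ, Real.cos θ)

lemma param_deriv {F F' : ℝ → ℝ → ℝ}
    (hFc : Continuous fun q : ℝ × ℝ => F q.1 q.2)
    (hF'c : Continuous fun q : ℝ × ℝ => F' q.1 q.2)
    (hd : ∀ s θ, HasDerivAt (fun s' => F s' θ) (F' s θ) s) (s : ℝ) :
    HasDerivAt (fun s' => ∫ θ in (0:ℝ)..(2*π), F s' θ)
      (∫ θ in (0:ℝ)..(2*π), F' s θ) s := by
  have hK : IsCompact ((Set.Icc (s-1) (s+1)) ×ˢ (Set.Icc (0:ℝ) (2*π))) :=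
    (isCompact_Icc).prod isCompact_Icc
  obtain ⟨C, hC⟩ := hK.exists_bound_of_continuousOn hF'c.continuousOn
  have h := intervalIntegral.hasDerivAt_integral_of_dominated_loc_of_deriv_le
    (F := F) (F' := F') (x₀ := s) (a := (0:ℝ)) (b := 2*π) (μ := volume)
    (bound := fun _ => C) (s := Metric.ball s 1) (Metric.ball_mem_nhds s one_pos)
    (Filter.Eventually.of_forall fun y =>
      (hFc.comp (Continuous.prodMk_right y)).aestronglyMeasurable)
    ((hFc.comp (Continuous.prodMk_right s)).intervalIntegrable _ _)
    ((hF'c.comp (Continuous.prodMk_right s)).aestronglyMeasurable)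
    (Filter.Eventually.of_forall ?_) intervalIntegrable_const
    (Filter.Eventually.of_forall fun θ _ y _ => hd y θ)
  · exact h.2
  · intro θ hθ y hy
    have hθ' : θ ∈ Set.Icc (0:ℝ) (2*π) := by
      rw [Set.uIoc_of_le (by positivity)] at hθ
      exact Set.Ioc_subset_Icc_self hθ
    have hy' : y ∈ Set.Icc (s-1) (s+1) := by
      rw [Metric.mem_ball, Real.dist_eq, abs_lt] at hy
      constructor <;> linarith [hy.1, hy.2]
    exact hC (y, θ) (Set.mk_mem_prod hy' hθ')

lemma hasDerivAt_pt_s (x : ℝ × ℝ) (θ s : ℝ) :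
    HasDerivAt (fun s' => pt x s' θ) (uvec θ) s := by
  have h1 : HasDerivAt (fun s' : ℝ => x.1 + s' * Real.cos θ) (Real.cos θ) s :=
    (hasDerivAt_mul_const (Real.cos θ)).const_add x.1
  have h2 : HasDerivAt (fun s' : ℝ => x.2 + s' * Real.sin θ) (Real.sin θ) s :=
    (hasDerivAt_mul_const (Real.sin θ)).const_add x.2
  exact h1.prodMk h2

lemma hasDerivAt_pt_θ (x : ℝ × ℝ) (s θ : ℝ) :
    HasDerivAt (fun θ' => pt x s θ') (s • vvec θ) θ := by
  have h1 : HasDerivAt (fun θ' : ℝ => x.1 + s * Real.cos θ') (s * (-Real.sin θ)) θ :=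
    ((Real.hasDerivAt_cos θ).const_mul s).const_add x.1
  have h2 : HasDerivAt (fun θ' : ℝ => x.2 + s * Real.sin θ') (s * Real.cos θ) θ :=
    ((Real.hasDerivAt_sin θ).const_mul s).const_add x.2
  exact (h1.prodMk h2 : _)

lemma hasDerivAt_vvec (θ : ℝ) : HasDerivAt vvec (-uvec θ) θ := by
  have h1 : HasDerivAt (fun θ' : ℝ => -Real.sin θ') (-Real.cos θ) θ :=
    (Real.hasDerivAt_sin θ).neg
  have h2 : HasDerivAt Real.cos (-Real.sin θ) θ := Real.hasDerivAt_cos θ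
  exact (h1.prodMk h2 : _)

variable {f : ℝ × ℝ → ℝ}

lemma hda_f_line (hf : ContDiff ℝ (⊤ : ℕ∞) f) (x : ℝ × ℝ) (s θ : ℝ) :
    HasDerivAt (fun s' => f (pt x s' θ)) (fderiv ℝ f (pt x s θ) (uvec θ)) s :=
  ((hf.differentiable (by simp) _).hasFDerivAt).comp_hasDerivAt s (hasDerivAt_pt_s x θ s)

lemma hda_f'_line (hf : ContDiff ℝ (⊤ : ℕ∞) f) (x : ℝ × ℝ) (s θ : ℝ) :
    HasDerivAt (fun s' => fderiv ℝ f (pt x s' θ) (uvec θ))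
      (fderiv ℝ (fderiv ℝ f) (pt x s θ) (uvec θ) (uvec θ)) s := by
  have h1 : HasDerivAt (fun s' => fderiv ℝ f (pt x s' θ))
      (fderiv ℝ (fderiv ℝ f) (pt x s θ) (uvec θ)) s :=
    (((hf.fderiv_right (m := (⊤ : ℕ∞)) (by simp)).differentiable (by simp) _).hasFDerivAt).comp_hasDerivAt s
      (hasDerivAt_pt_s x θ s)
  simpa using h1.clm_apply (hasDerivAt_const s (uvec θ))

lemma hda_f'_theta (hf : ContDiff ℝ (⊤ : ℕ∞) f) (x : ℝ × ℝ) (s θ : ℝ) :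
    HasDerivAt (fun θ' => fderiv ℝ f (pt x s θ') (vvec θ'))
      (s * fderiv ℝ (fderiv ℝ f) (pt x s θ) (vvec θ) (vvec θ)
        - fderiv ℝ f (pt x s θ) (uvec θ)) θ := by
  have h1 : HasDerivAt (fun θ' => fderiv ℝ f (pt x s θ'))
      (fderiv ℝ (fderiv ℝ f) (pt x s θ) (s • vvec θ)) θ :=
    (((hf.fderiv_right (m := (⊤ : ℕ∞)) (by simp)).differentiable (by simp) _).hasFDerivAt).comp_hasDerivAt θ
      (hasDerivAt_pt_θ x s θ)
  have h2 := h1.clm_apply (hasDerivAt_vvec θ)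
  simpa [smul_eq_mul, sub_eq_add_neg] using h2

lemma cont_F0 (hf : ContDiff ℝ (⊤ : ℕ∞) f) (x : ℝ × ℝ) :
    Continuous (fun q : ℝ × ℝ => f (pt x q.1 q.2)) := by
  have : Continuous (fun q : ℝ × ℝ => pt x q.1 q.2) := by unfold pt; fun_prop
  exact hf.continuous.comp this

lemma cont_F1 (hf : ContDiff ℝ (⊤ : ℕ∞) f) (x : ℝ × ℝ) :
    Continuous (fun q : ℝ × ℝ => fderiv ℝ f (pt x q.1 q.2) (uvec q.2)) := by
  have hp : Continuous (fun q : ℝ × ℝ => pt x q.1 q.2) := by unfold pt; fun_prop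
  have hu : Continuous (fun q : ℝ × ℝ => uvec q.2) := by unfold uvec; fun_prop
  exact ((hf.continuous_fderiv (by simp)).comp hp).clm_apply hu

lemma cont_F2 (hf : ContDiff ℝ (⊤ : ℕ∞) f) (x : ℝ × ℝ) :
    Continuous (fun q : ℝ × ℝ =>
      fderiv ℝ (fderiv ℝ f) (pt x q.1 q.2) (uvec q.2) (uvec q.2)) := by
  have hp : Continuous (fun q : ℝ × ℝ => pt x q.1 q.2) := by unfold pt; fun_prop
  have hu : Continuous (fun q : ℝ × ℝ => uvec q.2) := by unfold uvec; fun_prop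
  exact ((((hf.fderiv_right (m := (⊤ : ℕ∞)) (by simp)).continuous_fderiv (by simp)).comp hp).clm_apply hu).clm_apply hu

lemma rot_trace (A : (ℝ × ℝ) →L[ℝ] ((ℝ × ℝ) →L[ℝ] ℝ)) (θ : ℝ) :
    A (uvec θ) (uvec θ) + A (vvec θ) (vvec θ)
      = A (1, 0) (1, 0) + A (0, 1) (0, 1) := by
  have hu : uvec θ = Real.cos θ • ((1:ℝ), (0:ℝ)) + Real.sin θ • ((0:ℝ), (1:ℝ)) := by
    simp [uvec, Prod.ext_iff]
  have hv : vvec θ = (-Real.sin θ) • ((1:ℝ), (0:ℝ)) + Real.cos θ • ((0:ℝ), (1:ℝ)) := by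
    simp [vvec, Prod.ext_iff]
  have hcs := Real.sin_sq_add_cos_sq θ
  rw [hu, hv]
  simp only [map_add, _root_.map_smul, ContinuousLinearMap.add_apply,
    ContinuousLinearMap.coe_smul', Pi.smul_apply, ContinuousLinearMap.smul_apply, smul_eq_mul]
  linear_combination ((A (1, 0)) (1, 0) + (A (0, 1)) (0, 1)) * hcs

/-- `planeLaplacian` in terms of the second `fderiv`. -/
lemma planeLaplacian_eq (hf : ContDiff ℝ (⊤ : ℕ∞) f) (z : ℝ × ℝ) :
    planeLaplacian f z = fderiv ℝ (fderiv ℝ f) z (1, 0) (1, 0)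
      + fderiv ℝ (fderiv ℝ f) z (0, 1) (0, 1) := by
  have key : ∀ θ₀ : ℝ, iteratedDeriv 2 (fun t => f (pt z t θ₀)) 0
      = fderiv ℝ (fderiv ℝ f) z (uvec θ₀) (uvec θ₀) := by
    intro θ₀
    rw [iteratedDeriv_succ, iteratedDeriv_one]
    have hd : deriv (fun t => f (pt z t θ₀)) = fun t => fderiv ℝ f (pt z t θ₀) (uvec θ₀) := by
      funext t; exact (hda_f_line hf z t θ₀).deriv
    rw [hd]
    have := (hda_f'_line hf z 0 θ₀).deriv
    rw [this]
    simp [pt]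
  have h1 : (fun t => f (z.1 + t, z.2)) = fun t => f (pt z t 0) := by
    funext t; simp [pt]
  have h2 : (fun t => f (z.1, z.2 + t)) = fun t => f (pt z t (π/2)) := by
    funext t; simp [pt]
  rw [planeLaplacian, h1, h2, key 0, key (π/2)]
  have hu0 : uvec 0 = ((1:ℝ), (0:ℝ)) := by simp [uvec]
  have hu1 : uvec (π/2) = ((0:ℝ), (1:ℝ)) := by simp [uvec]
  rw [hu0, hu1]

lemma cont_F2v (hf : ContDiff ℝ (⊤ : ℕ∞) f) (x : ℝ × ℝ) :
    Continuous (fun q : ℝ × ℝ =>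
      fderiv ℝ (fderiv ℝ f) (pt x q.1 q.2) (vvec q.2) (vvec q.2)) := by
  have hp : Continuous (fun q : ℝ × ℝ => pt x q.1 q.2) := by unfold pt; fun_prop
  have hv : Continuous (fun q : ℝ × ℝ => vvec q.2) := by unfold vvec; fun_prop
  exact ((((hf.fderiv_right (m := (⊤ : ℕ∞)) (by simp)).continuous_fderiv (by simp)).comp hp).clm_apply hv).clm_apply hv

noncomputable def sphM (f : ℝ × ℝ → ℝ) (x : ℝ × ℝ) (s : ℝ) : ℝ :=
  (2*π)⁻¹ * ∫ θ in (0:ℝ)..(2*π), f (pt x s θ)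

noncomputable def sphM1 (f : ℝ × ℝ → ℝ) (x : ℝ × ℝ) (s : ℝ) : ℝ :=
  (2*π)⁻¹ * ∫ θ in (0:ℝ)..(2*π), fderiv ℝ f (pt x s θ) (uvec θ)

noncomputable def sphM2 (f : ℝ × ℝ → ℝ) (x : ℝ × ℝ) (s : ℝ) : ℝ :=
  (2*π)⁻¹ * ∫ θ in (0:ℝ)..(2*π), fderiv ℝ (fderiv ℝ f) (pt x s θ) (uvec θ) (uvec θ)

lemma hasDerivAt_sphM (hf : ContDiff ℝ (⊤ : ℕ∞) f) (x : ℝ × ℝ) (s : ℝ) :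
    HasDerivAt (sphM f x) (sphM1 f x s) s :=
  HasDerivAt.const_mul ((2*π)⁻¹)
    (param_deriv (cont_F0 hf x) (cont_F1 hf x) (fun s θ => hda_f_line hf x s θ) s)

lemma hasDerivAt_sphM1 (hf : ContDiff ℝ (⊤ : ℕ∞) f) (x : ℝ × ℝ) (s : ℝ) :
    HasDerivAt (sphM1 f x) (sphM2 f x s) s :=
  HasDerivAt.const_mul ((2*π)⁻¹)
    (param_deriv (cont_F1 hf x) (cont_F2 hf x) (fun s θ => hda_f'_line hf x s θ) s)

lemma continuous_sphM (hf : ContDiff ℝ (⊤ : ℕ∞) f) (x : ℝ × ℝ) : Continuous (sphM f x) :=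
  continuous_iff_continuousAt.2 fun s => (hasDerivAt_sphM hf x s).continuousAt

lemma sphM_zero (hf : ContDiff ℝ (⊤ : ℕ∞) f) (x : ℝ × ℝ) : sphM f x 0 = f x := by
  have : ∀ θ : ℝ, f (pt x 0 θ) = f x := by intro θ; simp [pt]
  rw [sphM]
  rw [intervalIntegral.integral_congr (g := fun _ => f x) (fun θ _ => this θ)]
  rw [intervalIntegral.integral_const]
  have : (2:ℝ)*π ≠ 0 := by positivity
  simp only [sub_zero, smul_eq_mul]
  field_simp

lemma cont_theta0 (hf : ContDiff ℝ (⊤ : ℕ∞) f) (x : ℝ × ℝ) (s : ℝ) :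
    Continuous fun θ => f (pt x s θ) :=
  (cont_F0 hf x).comp ((continuous_const (y := s)).prodMk continuous_id)

lemma cont_theta1 (hf : ContDiff ℝ (⊤ : ℕ∞) f) (x : ℝ × ℝ) (s : ℝ) :
    Continuous fun θ => fderiv ℝ f (pt x s θ) (uvec θ) :=
  (cont_F1 hf x).comp ((continuous_const (y := s)).prodMk continuous_id)

lemma cont_theta2 (hf : ContDiff ℝ (⊤ : ℕ∞) f) (x : ℝ × ℝ) (s : ℝ) :
    Continuous fun θ => fderiv ℝ (fderiv ℝ f) (pt x s θ) (uvec θ) (uvec θ) :=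
  (cont_F2 hf x).comp ((continuous_const (y := s)).prodMk continuous_id)

lemma cont_theta2v (hf : ContDiff ℝ (⊤ : ℕ∞) f) (x : ℝ × ℝ) (s : ℝ) :
    Continuous fun θ => fderiv ℝ (fderiv ℝ f) (pt x s θ) (vvec θ) (vvec θ) :=
  (cont_F2v hf x).comp ((continuous_const (y := s)).prodMk continuous_id)

lemma theta_exact (hf : ContDiff ℝ (⊤ : ℕ∞) f) (x : ℝ × ℝ) (s : ℝ) :
    ∫ θ in (0:ℝ)..(2*π),
      (s * fderiv ℝ (fderiv ℝ f) (pt x s θ) (vvec θ) (vvec θ)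
        - fderiv ℝ f (pt x s θ) (uvec θ)) = 0 := by
  have hcont : Continuous (fun θ =>
      s * fderiv ℝ (fderiv ℝ f) (pt x s θ) (vvec θ) (vvec θ)
        - fderiv ℝ f (pt x s θ) (uvec θ)) := by
    exact (continuous_const.mul (cont_theta2v hf x s)).sub (cont_theta1 hf x s)
  rw [intervalIntegral.integral_eq_sub_of_hasDerivAt
    (fun θ _ => hda_f'_theta hf x s θ) (hcont.intervalIntegrable _ _)]
  have hpt : pt x s (2*π) = pt x s 0 := by simp [pt]
  have hv : vvec (2*π) = vvec 0 := by simp [vvec]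
  rw [hpt, hv, sub_self]

lemma master (hf : ContDiff ℝ (⊤ : ℕ∞) f) (hHelm : ∀ z, planeLaplacian f z + f z = 0)
    (x : ℝ × ℝ) (s : ℝ) :
    s * sphM1 f x s = - ∫ t in (0:ℝ)..s, t * sphM f x t := by
  have hMc : Continuous (fun t => t * sphM f x t) :=
    continuous_id.mul (continuous_sphM hf x)
  set G : ℝ → ℝ := fun s => s * sphM1 f x s + ∫ t in (0:ℝ)..s, t * sphM f x t with hGdef
  have hderiv0 : ∀ s : ℝ, sphM1 f x s + s * sphM2 f x s + s * sphM f x s = 0 := by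
    intro s
    have hc1 := cont_theta1 hf x s
    have hc2v := cont_theta2v hf x s
    have hc2 := cont_theta2 hf x s
    have hc0 := cont_theta0 hf x s
    have key : (∫ θ in (0:ℝ)..(2*π), fderiv ℝ f (pt x s θ) (uvec θ))
        = s * ∫ θ in (0:ℝ)..(2*π), fderiv ℝ (fderiv ℝ f) (pt x s θ) (vvec θ) (vvec θ) := by
      have h := theta_exact hf x s
      rw [intervalIntegral.integral_sub ((show Continuous fun θ => s * fderiv ℝ (fderiv ℝ f) (pt x s θ) (vvec θ) (vvec θ) from continuous_const.mul hc2v).intervalIntegrable _ _)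
        (hc1.intervalIntegrable _ _), sub_eq_zero] at h
      rw [← h, intervalIntegral.integral_const_mul]
    have hpoint : ∀ θ : ℝ, fderiv ℝ (fderiv ℝ f) (pt x s θ) (uvec θ) (uvec θ) + f (pt x s θ)
        = -(fderiv ℝ (fderiv ℝ f) (pt x s θ) (vvec θ) (vvec θ)) := by
      intro θ
      have h := hHelm (pt x s θ)
      rw [planeLaplacian_eq hf] at h
      have h2 := rot_trace (fderiv ℝ (fderiv ℝ f) (pt x s θ)) θ
      linarith
    have hsum : (∫ θ in (0:ℝ)..(2*π), fderiv ℝ (fderiv ℝ f) (pt x s θ) (uvec θ) (uvec θ))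
        + (∫ θ in (0:ℝ)..(2*π), f (pt x s θ))
        = - ∫ θ in (0:ℝ)..(2*π), fderiv ℝ (fderiv ℝ f) (pt x s θ) (vvec θ) (vvec θ) := by
      rw [← intervalIntegral.integral_add (hc2.intervalIntegrable _ _) (hc0.intervalIntegrable _ _),
        ← intervalIntegral.integral_neg]
      exact intervalIntegral.integral_congr (fun θ _ => hpoint θ)
    rw [sphM1, sphM2, sphM, key]
    set A := ∫ θ in (0:ℝ)..(2*π), fderiv ℝ (fderiv ℝ f) (pt x s θ) (uvec θ) (uvec θ)
    set B := ∫ θ in (0:ℝ)..(2*π), f (pt x s θ)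
    set Dv := ∫ θ in (0:ℝ)..(2*π), fderiv ℝ (fderiv ℝ f) (pt x s θ) (vvec θ) (vvec θ)
    have : A + B = -Dv := hsum
    linear_combination ((2*π)⁻¹ * s) * this
  have hG : ∀ s : ℝ, HasDerivAt G 0 s := by
    intro s
    have h1 : HasDerivAt (fun s => s * sphM1 f x s) (1 * sphM1 f x s + s * sphM2 f x s) s :=
      (hasDerivAt_id s).mul (hasDerivAt_sphM1 hf x s)
    have h2 : HasDerivAt (fun s => ∫ t in (0:ℝ)..s, t * sphM f x t) (s * sphM f x s) s :=
      intervalIntegral.integral_hasDerivAt_right (hMc.intervalIntegrable _ _)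
        (hMc.stronglyMeasurableAtFilter _ _) hMc.continuousAt
    have h3 := h1.add h2
    have : 1 * sphM1 f x s + s * sphM2 f x s + s * sphM f x s = 0 := by
      have := hderiv0 s; linarith
    rwa [this] at h3
  have hconst := is_const_of_deriv_eq_zero (fun s => (hG s).differentiableAt)
    (fun s => (hG s).deriv) s 0
  have hG0 : G 0 = 0 := by simp [hGdef]
  have : G s = 0 := by rw [hconst, hG0]
  rw [hGdef] at this
  simp only at this
  linarith [this]


variable {f : ℝ × ℝ → ℝ}

lemma vanish {u u₁ : ℝ → ℝ} (hu : ∀ s, HasDerivAt u (u₁ s) s) (hu₁c : Continuous u₁)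
    (h0 : u 0 = 0)
    (hm : ∀ s, s * u₁ s = -∫ t in (0:ℝ)..s, t * u t)
    {R : ℝ} (hR : 0 ≤ R) {s : ℝ} (hs : s ∈ Set.Icc 0 R) : u s = 0 := by
  have huc : Continuous u := continuous_iff_continuousAt.2 fun t => (hu t).continuousAt
  have habs : Continuous fun t => |u t| := huc.abs
  set w : ℝ → ℝ := fun s => ∫ t in (0:ℝ)..s, |u t| with hwdef
  have hw : ∀ t : ℝ, HasDerivAt w (|u t|) t := fun t =>
    intervalIntegral.integral_hasDerivAt_right (habs.intervalIntegrable _ _)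
      (habs.stronglyMeasurableAtFilter _ _) habs.continuousAt
  have hwmono : Monotone w :=
    monotone_of_deriv_nonneg (fun t => (hw t).differentiableAt)
      (fun t => by rw [(hw t).deriv]; positivity)
  have hw0 : w 0 = 0 := by simp [hwdef]
  have hwnonneg : ∀ t : ℝ, 0 ≤ t → 0 ≤ w t := fun t ht => hw0 ▸ hwmono ht
  -- pointwise bound |u₁ t| ≤ w t for 0 < t
  have hbound1 : ∀ t : ℝ, 0 < t → |u₁ t| ≤ w t := by
    intro t ht
    have h1 : |t * u₁ t| = |∫ τ in (0:ℝ)..t, τ * u τ| := by rw [hm t, abs_neg]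
    have h2 : |∫ τ in (0:ℝ)..t, τ * u τ| ≤ ∫ τ in (0:ℝ)..t, |τ * u τ| :=
      intervalIntegral.abs_integral_le_integral_abs ht.le
    have h3 : (∫ τ in (0:ℝ)..t, |τ * u τ|) ≤ ∫ τ in (0:ℝ)..t, t * |u τ| := by
      apply intervalIntegral.integral_mono_on ht.le
      · exact ((continuous_id.mul huc).abs).intervalIntegrable _ _
      · exact (continuous_const.mul habs).intervalIntegrable _ _
      · intro τ hτ
        rw [abs_mul, abs_of_nonneg hτ.1]
        exact mul_le_mul_of_nonneg_right hτ.2 (abs_nonneg _)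
    have h4 : (∫ τ in (0:ℝ)..t, t * |u τ|) = t * w t := by
      rw [intervalIntegral.integral_const_mul]
    have h5 : |t * u₁ t| = t * |u₁ t| := by rw [abs_mul, abs_of_pos ht]
    nlinarith [h1, h2, h3, h4, h5]
  -- key bound |u s| ≤ R * w s on [0, R]
  have hkey : ∀ t ∈ Set.Icc (0:ℝ) R, |u t| ≤ R * w t := by
    intro t ht
    have hus : u t = ∫ τ in (0:ℝ)..t, u₁ τ := by
      rw [intervalIntegral.integral_eq_sub_of_hasDerivAt (fun τ _ => hu τ)
        (hu₁c.intervalIntegrable _ _), h0, sub_zero]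
    have hae : ∀ᵐ τ ∂(volume.restrict (Set.Icc (0:ℝ) t)), |u₁ τ| ≤ w τ := by
      have hne : ∀ᵐ τ : ℝ ∂(volume.restrict (Set.Icc (0:ℝ) t)), τ ≠ 0 := by
        refine (MeasureTheory.ae_restrict_iff' measurableSet_Icc).2 ?_
        have : ∀ᵐ τ : ℝ, τ ≠ 0 := by
          rw [MeasureTheory.ae_iff]
          simpa using Real.volume_singleton (a := 0)
        exact this.mono fun τ h _ => h
      have hmem : ∀ᵐ τ ∂(volume.restrict (Set.Icc (0:ℝ) t)), τ ∈ Set.Icc (0:ℝ) t :=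
        MeasureTheory.ae_restrict_mem measurableSet_Icc
      filter_upwards [hne, hmem] with τ h1 h2
      exact hbound1 τ (lt_of_le_of_ne h2.1 (Ne.symm h1))
    have h6 : (∫ τ in (0:ℝ)..t, |u₁ τ|) ≤ ∫ τ in (0:ℝ)..t, w τ := by
      apply intervalIntegral.integral_mono_ae_restrict ht.1
        ((hu₁c.abs).intervalIntegrable _ _)
        ((continuous_iff_continuousAt.2 fun τ => (hw τ).continuousAt).intervalIntegrable _ _)
      exact hae
    have h7 : (∫ τ in (0:ℝ)..t, w τ) ≤ ∫ τ in (0:ℝ)..t, w t := by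
      apply intervalIntegral.integral_mono_on ht.1
        ((continuous_iff_continuousAt.2 fun τ => (hw τ).continuousAt).intervalIntegrable _ _)
        (intervalIntegrable_const)
      exact fun τ hτ => hwmono hτ.2
    have h8 : (∫ τ in (0:ℝ)..t, w t) = t * w t := by simp [mul_comm]
    have h9 : |u t| ≤ ∫ τ in (0:ℝ)..t, |u₁ τ| := by
      rw [hus]
      exact intervalIntegral.abs_integral_le_integral_abs ht.1
    have h10 : t * w t ≤ R * w t :=
      mul_le_mul_of_nonneg_right ht.2 (hwnonneg t ht.1)
    linarith
  -- Gronwall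
  set h : ℝ → ℝ := fun t => w t * Real.exp (-R * t) with hhdef
  have hhd : ∀ t : ℝ, HasDerivAt h ((|u t| - R * w t) * Real.exp (-R * t)) t := by
    intro t
    have he : HasDerivAt (fun t : ℝ => Real.exp (-R * t)) (-R * Real.exp (-R * t)) t := by
      have := (Real.hasDerivAt_exp (-R * t)).comp t
        ((hasDerivAt_id t).const_mul (-R))
      exact this.congr_deriv (by ring)
    have := (hw t).mul he
    exact this.congr_deriv (by ring)
  have hanti : AntitoneOn h (Set.Icc 0 R) := by
    apply antitoneOn_of_deriv_nonpos (convex_Icc 0 R)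
      (continuous_iff_continuousAt.2 fun t => (hhd t).continuousAt).continuousOn
      (fun t _ => (hhd t).differentiableAt.differentiableWithinAt)
    intro t ht
    rw [interior_Icc] at ht
    rw [(hhd t).deriv]
    have := hkey t (Set.mem_Icc.2 ⟨ht.1.le, ht.2.le⟩)
    have hexp : (0:ℝ) < Real.exp (-R * t) := Real.exp_pos _
    nlinarith
  have hhs : h s ≤ h 0 := hanti (Set.mem_Icc.2 ⟨le_refl 0, hR⟩) hs hs.1
  have hh0 : h 0 = 0 := by simp [hhdef, hw0]
  have hws : w s = 0 := by
    have h1 : 0 ≤ w s := hwnonneg s hs.1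
    have h2 : w s * Real.exp (-R * s) ≤ 0 := by rw [← hh0]; exact hhs
    have hexp : (0:ℝ) < Real.exp (-R * s) := Real.exp_pos _
    nlinarith
  have := hkey s hs
  rw [hws] at this
  simpa using abs_nonpos_iff.mp (by linarith)

/-- the reference solution -/
noncomputable def f₀ : ℝ × ℝ → ℝ := fun z => Real.cos z.2

lemma contDiff_f₀ : ContDiff ℝ (⊤ : ℕ∞) f₀ := Real.contDiff_cos.comp contDiff_snd

lemma helm_f₀ : ∀ z, planeLaplacian f₀ z + f₀ z = 0 := by
  intro z
  have hc1 : ∀ t : ℝ, HasDerivAt (fun t : ℝ => Real.cos (z.2 + t)) (-Real.sin (z.2 + t)) t := by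
    intro t
    simpa [Function.comp_def] using (Real.hasDerivAt_cos (z.2 + t)).comp t ((hasDerivAt_id t).const_add z.2)
  have hc2 : ∀ t : ℝ, HasDerivAt (fun t : ℝ => -Real.sin (z.2 + t)) (-Real.cos (z.2 + t)) t := by
    intro t
    exact ((Real.hasDerivAt_sin (z.2 + t)).comp t ((hasDerivAt_id t).const_add z.2)).neg.congr_deriv (by ring)
  have e1 : iteratedDeriv 2 (fun t => f₀ (z.1 + t, z.2)) 0 = 0 := by
    have : (fun t : ℝ => f₀ (z.1 + t, z.2)) = fun _ : ℝ => Real.cos z.2 := rfl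
    rw [this]
    simp [iteratedDeriv_succ, iteratedDeriv_zero]
  have e2 : iteratedDeriv 2 (fun t => f₀ (z.1, z.2 + t)) 0 = -Real.cos z.2 := by
    have h : (fun t : ℝ => f₀ (z.1, z.2 + t)) = fun t : ℝ => Real.cos (z.2 + t) := rfl
    rw [h, iteratedDeriv_succ, iteratedDeriv_one]
    have hd : deriv (fun t : ℝ => Real.cos (z.2 + t)) = fun t => -Real.sin (z.2 + t) := by
      funext t; exact (hc1 t).deriv
    rw [hd, (hc2 0).deriv]
    simp
  rw [show planeLaplacian f₀ z = iteratedDeriv 2 (fun t => f₀ (z.1 + t, z.2)) 0 + iteratedDeriv 2 (fun t => f₀ (z.1, z.2 + t)) 0 from rfl, e1, e2]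
  show 0 + -Real.cos z.2 + Real.cos z.2 = 0
  simp

lemma besselJ0_eq_sphM : besselJ0 = sphM f₀ (0, 0) := by
  funext s
  have h1 : ∀ θ : ℝ, Complex.exp (Complex.I * (s:ℂ) * (Real.sin θ : ℂ))
      = ((Real.cos (s * Real.sin θ) : ℝ) : ℂ)
        + ((Real.sin (s * Real.sin θ) : ℝ) : ℂ) * Complex.I := by
    intro θ
    rw [show Complex.I * (s:ℂ) * (Real.sin θ : ℂ)
        = ((s * Real.sin θ : ℝ) : ℂ) * Complex.I by push_cast; ring]
    rw [Complex.exp_mul_I]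
    push_cast
    ring
  have hint1 : IntervalIntegrable (fun θ : ℝ => ((Real.cos (s * Real.sin θ) : ℝ) : ℂ))
      volume 0 (2*π) := by
    apply Continuous.intervalIntegrable; fun_prop
  have hint2 : IntervalIntegrable (fun θ : ℝ => ((Real.sin (s * Real.sin θ) : ℝ) : ℂ) * Complex.I)
      volume 0 (2*π) := by
    apply Continuous.intervalIntegrable
    apply Continuous.mul ?_ continuous_const
    fun_prop
  have h2 : (∫ θ in (0:ℝ)..(2*π), Complex.exp (Complex.I * (s:ℂ) * (Real.sin θ : ℂ)))
      = ((∫ θ in (0:ℝ)..(2*π), Real.cos (s * Real.sin θ) : ℝ) : ℂ)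
        + ((∫ θ in (0:ℝ)..(2*π), Real.sin (s * Real.sin θ) : ℝ) : ℂ) * Complex.I := by
    rw [intervalIntegral.integral_congr (g := fun θ : ℝ =>
      ((Real.cos (s * Real.sin θ) : ℝ) : ℂ) + ((Real.sin (s * Real.sin θ) : ℝ) : ℂ) * Complex.I)
      (fun θ _ => h1 θ)]
    rw [intervalIntegral.integral_add hint1 hint2, intervalIntegral.integral_mul_const,
      intervalIntegral.integral_ofReal, intervalIntegral.integral_ofReal]
  rw [besselJ0, h2]
  have hpi : (π : ℝ) ≠ 0 := Real.pi_ne_zero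
  have h3 : (1 / (2 * (Real.pi : ℂ))) = (((2*π)⁻¹ : ℝ) : ℂ) := by
    push_cast
    rw [one_div]
  rw [h3]
  have h4 : ∀ θ : ℝ, f₀ (pt (0,0) s θ) = Real.cos (s * Real.sin θ) := by
    intro θ; simp [f₀, pt]
  rw [sphM, intervalIntegral.integral_congr (fun θ _ => h4 θ)]
  simp [Complex.add_re, Complex.mul_re, Complex.ofReal_re, Complex.ofReal_im,
    Complex.I_re, Complex.I_im]

lemma continuous_sphM1 (hf : ContDiff ℝ (⊤ : ℕ∞) f) (x : ℝ × ℝ) : Continuous (sphM1 f x) :=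
  continuous_iff_continuousAt.2 fun s => (hasDerivAt_sphM1 hf x s).continuousAt

lemma besselJ0_zero : besselJ0 0 = 1 := by
  rw [besselJ0_eq_sphM, sphM_zero contDiff_f₀]
  simp [f₀]

lemma continuous_besselJ0 : Continuous besselJ0 := by
  rw [besselJ0_eq_sphM]; exact continuous_sphM contDiff_f₀ _

/-- Mean value property for solutions of the Helmholtz equation. -/
theorem mvp (hf : ContDiff ℝ (⊤ : ℕ∞) f) (hHelm : ∀ z, planeLaplacian f z + f z = 0)
    (x : ℝ × ℝ) {s : ℝ} (hs : 0 ≤ s) : sphM f x s = f x * besselJ0 s := by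
  set u : ℝ → ℝ := fun t => sphM f x t - f x * sphM f₀ (0,0) t with hudef
  set u₁ : ℝ → ℝ := fun t => sphM1 f x t - f x * sphM1 f₀ (0,0) t with hu₁def
  have hu : ∀ t, HasDerivAt u (u₁ t) t := fun t =>
    (hasDerivAt_sphM hf x t).sub ((hasDerivAt_sphM contDiff_f₀ (0,0) t).const_mul (f x))
  have hu₁c : Continuous u₁ :=
    (continuous_sphM1 hf x).sub (continuous_const.mul (continuous_sphM1 contDiff_f₀ (0,0)))
  have h0 : u 0 = 0 := by
    simp [hudef, sphM_zero hf, sphM_zero contDiff_f₀, f₀]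
  have hm : ∀ t, t * u₁ t = -∫ τ in (0:ℝ)..t, τ * u τ := by
    intro t
    have h1 := master hf hHelm x t
    have h2 := master contDiff_f₀ helm_f₀ (0,0) t
    have hint1 : IntervalIntegrable (fun τ => τ * sphM f x τ) volume 0 t :=
      (continuous_id.mul (continuous_sphM hf x)).intervalIntegrable _ _
    have hint2 : IntervalIntegrable (fun τ => f x * (τ * sphM f₀ (0,0) τ)) volume 0 t :=
      (continuous_const.mul (continuous_id.mul (continuous_sphM contDiff_f₀ _))).intervalIntegrable _ _
    have : (∫ τ in (0:ℝ)..t, τ * u τ)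
        = (∫ τ in (0:ℝ)..t, τ * sphM f x τ) - f x * ∫ τ in (0:ℝ)..t, τ * sphM f₀ (0,0) τ := by
      rw [← intervalIntegral.integral_const_mul, ← intervalIntegral.integral_sub hint1 hint2]
      apply intervalIntegral.integral_congr
      intro τ _
      simp only [hudef]
      ring
    rw [this, hu₁def]
    simp only
    rw [mul_sub]
    rw [h1]
    have : t * (f x * sphM1 f₀ (0,0) t) = f x * (t * sphM1 f₀ (0,0) t) := by ring
    rw [this, h2]
    ring
  have := vanish hu hu₁c h0 hm hs (Set.mem_Icc.2 ⟨hs, le_refl s⟩)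
  rw [hudef] at this
  simp only at this
  rw [besselJ0_eq_sphM]
  linarith

lemma besselJ0_pos_of_lt_first {r₁ : ℝ}
    (hfirst : ∀ s, 0 < s → s < r₁ → besselJ0 s ≠ 0)
    {s : ℝ} (h0 : 0 ≤ s) (hs : s < r₁) : 0 < besselJ0 s := by
  rcases eq_or_lt_of_le h0 with h | h
  · rw [← h, besselJ0_zero]; norm_num
  by_contra hle
  push_neg at hle
  have hne := hfirst s h hs
  have hlt : besselJ0 s < 0 := lt_of_le_of_ne hle hne
  have h01 : besselJ0 0 = 1 := besselJ0_zero
  have := intermediate_value_Ioo' h.le (continuous_besselJ0.continuousOn (s := Set.Icc 0 s))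
  have h0mem : (0:ℝ) ∈ Set.Ioo (besselJ0 s) (besselJ0 0) := by
    rw [h01]; exact ⟨hlt, one_pos⟩
  obtain ⟨c, hc, hc0⟩ := this h0mem
  exact hfirst c hc.1 (lt_trans hc.2 hs) hc0

lemma besselJ0_neg_between {r₁ r₂ : ℝ} (h₁ : 0 < r₁) (h₁₂ : r₁ < r₂)
    (hz₁ : besselJ0 r₁ = 0)
    (hfirst : ∀ s, 0 < s → s < r₁ → besselJ0 s ≠ 0)
    (hsecond : ∀ s, r₁ < s → s < r₂ → besselJ0 s ≠ 0)
    {r : ℝ} (hr : r ∈ Set.Ioo r₁ r₂) : besselJ0 r < 0 := by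
  -- derivative of J₀ at r₁ is negative
  have hmas := master contDiff_f₀ helm_f₀ (0,0) r₁
  rw [← besselJ0_eq_sphM] at hmas
  have hipos : 0 < ∫ t in (0:ℝ)..r₁, t * besselJ0 t := by
    apply intervalIntegral.intervalIntegral_pos_of_pos_on
      ((continuous_id.mul continuous_besselJ0).intervalIntegrable _ _)
    · intro t ht
      exact mul_pos ht.1 (besselJ0_pos_of_lt_first hfirst ht.1.le ht.2)
    · exact h₁
  have hd1neg : sphM1 f₀ (0,0) r₁ < 0 := by nlinarith
  -- find s slightly to the right of r₁ with J₀ s < 0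
  have hder : HasDerivAt besselJ0 (sphM1 f₀ (0,0) r₁) r₁ := by
    rw [besselJ0_eq_sphM]; exact hasDerivAt_sphM contDiff_f₀ _ _
  have hslope := hasDerivAt_iff_tendsto_slope.1 hder
  have hev : ∀ᶠ y in nhdsWithin r₁ (Set.Ioi r₁), slope besselJ0 r₁ y < 0 := by
    have h1 : ∀ᶠ y in nhdsWithin r₁ {r₁}ᶜ, slope besselJ0 r₁ y < 0 :=
      hslope.eventually_lt_const hd1neg
    exact h1.filter_mono (nhdsWithin_mono _ (fun y hy => ne_of_gt hy))
  have hev2 : ∀ᶠ y in nhdsWithin r₁ (Set.Ioi r₁), y ∈ Set.Ioo r₁ r :=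
    Ioo_mem_nhdsGT_of_mem ⟨le_refl r₁, hr.1⟩
  obtain ⟨s, hs1, hs2⟩ := (hev.and hev2).exists
  have hJs : besselJ0 s < 0 := by
    rw [slope_def_field, hz₁, sub_zero] at hs1
    have hpos : 0 < s - r₁ := by linarith [hs2.1]
    have := div_neg_iff.1 hs1
    rcases this with ⟨h, _⟩ | ⟨h, h'⟩
    · linarith
    · exact h
  -- conclude J₀ r < 0
  have hrne := hsecond r hr.1 hr.2
  by_contra hge
  push_neg at hge
  have hrpos : 0 < besselJ0 r := lt_of_le_of_ne hge (Ne.symm hrne)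
  have := intermediate_value_Ioo hs2.2.le (continuous_besselJ0.continuousOn (s := Set.Icc s r))
  have h0mem : (0:ℝ) ∈ Set.Ioo (besselJ0 s) (besselJ0 r) := ⟨hJs, hrpos⟩
  obtain ⟨c, hc, hc0⟩ := this h0mem
  exact hsecond c (lt_trans hs2.1 hc.1) (lt_trans hc.2 hr.2) hc0

lemma euclidNorm_pt_sub {x : ℝ × ℝ} {r : ℝ} (hr : 0 ≤ r) (θ : ℝ) :
    euclidNorm (pt x r θ - x) = r := by
  have h1 : pt x r θ - x = (r * Real.cos θ, r * Real.sin θ) := by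
    simp [pt, Prod.ext_iff]
  rw [euclidNorm, h1]
  have : (r * Real.cos θ) ^ 2 + (r * Real.sin θ) ^ 2 = r ^ 2 := by
    nlinarith [Real.sin_sq_add_cos_sq θ]
  rw [this]
  exact Real.sqrt_sq hr

lemma exists_theta {x z : ℝ × ℝ} {r : ℝ} (hr : 0 < r)
    (h : euclidNorm (z - x) = r) : ∃ θ, z = pt x r θ := by
  set c : ℂ := Complex.mk (z.1 - x.1) (z.2 - x.2) with hc
  have habs : ‖c‖ = r := by
    rw [Complex.norm_def, Complex.normSq_mk]
    rw [euclidNorm] at h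
    have : (z - x).1 = z.1 - x.1 ∧ (z - x).2 = z.2 - x.2 := ⟨rfl, rfl⟩
    rw [this.1, this.2] at h
    convert h using 2
    ring
  have hc0 : c ≠ 0 := by
    intro h0
    rw [h0] at habs
    simp at habs
    linarith
  refine ⟨c.arg, ?_⟩
  have h1 : r * Real.cos c.arg = z.1 - x.1 := by
    rw [Complex.cos_arg hc0, habs]
    field_simp
    exact rfl
  have h2 : r * Real.sin c.arg = z.2 - x.2 := by
    rw [Complex.sin_arg, habs]
    field_simp
    exact rfl
  rw [pt, Prod.ext_iff]
  constructor
  · simp only; linarith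
  · simp only; linarith

lemma circle_preconnected (x : ℝ × ℝ) {r : ℝ} (hr : 0 < r) :
    IsPreconnected {z : ℝ × ℝ | euclidNorm (z - x) = r} := by
  have hset : {z : ℝ × ℝ | euclidNorm (z - x) = r} = Set.range (fun θ => pt x r θ) := by
    ext z
    constructor
    · intro hz
      obtain ⟨θ, hθ⟩ := exists_theta hr hz
      exact ⟨θ, hθ.symm⟩
    · rintro ⟨θ, rfl⟩
      exact euclidNorm_pt_sub hr.le θ
  rw [hset]
  have hcont : Continuous (fun θ => pt x r θ) := by unfold pt; fun_prop
  exact (isConnected_range hcont).isPreconnected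


end CompInBall

open CompInBall in
/-- If `f` is a smooth solution of `Δf + f = 0`, `r` lies strictly between the first
two positive zeros of `J_0`, `f(x) ≠ 0` and `f` does not vanish on the circle of radius
`r` about `x`, then the connected component of `x` in `{f ≠ 0}` lies in `B(x, r)`. -/
theorem component_in_ball (f : ℝ × ℝ → ℝ) (hf : ContDiff ℝ (⊤ : ℕ∞) f)
    (hHelm : ∀ z, planeLaplacian f z + f z = 0)
    (r₁ r₂ : ℝ) (h₁ : 0 < r₁) (h₁₂ : r₁ < r₂)
    (hz₁ : besselJ0 r₁ = 0) (hz₂ : besselJ0 r₂ = 0)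
    (hfirst : ∀ s, 0 < s → s < r₁ → besselJ0 s ≠ 0)
    (hsecond : ∀ s, r₁ < s → s < r₂ → besselJ0 s ≠ 0)
    (r : ℝ) (hr : r ∈ Set.Ioo r₁ r₂)
    (x : ℝ × ℝ) (hx : f x ≠ 0)
    (hnv : ∀ z, euclidNorm (z - x) = r → f z ≠ 0) :
    connectedComponentIn {z : ℝ × ℝ | f z ≠ 0} x ⊆ {z : ℝ × ℝ | euclidNorm (z - x) < r} := by
  have hr0 : 0 < r := lt_trans h₁ hr.1
  intro z hz
  simp only [Set.mem_setOf_eq]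
  by_contra hcon
  push_neg at hcon
  set C := connectedComponentIn {z : ℝ × ℝ | f z ≠ 0} x with hC
  have hxC : x ∈ C := mem_connectedComponentIn hx
  have hCpre : IsPreconnected C := isPreconnected_connectedComponentIn
  have hCsub : C ⊆ {z : ℝ × ℝ | f z ≠ 0} := connectedComponentIn_subset _ _
  -- find w ∈ C on the circle of radius r
  have hn : Continuous fun w : ℝ × ℝ => euclidNorm (w - x) := by
    unfold euclidNorm
    fun_prop
  have himg : IsPreconnected ((fun w : ℝ × ℝ => euclidNorm (w - x)) '' C) :=
    hCpre.image _ hn.continuousOn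
  have hx0 : euclidNorm (x - x) = 0 := by simp [euclidNorm]
  have hrmem : r ∈ (fun w : ℝ × ℝ => euclidNorm (w - x)) '' C := by
    apply himg.ordConnected.out (Set.mem_image_of_mem _ hxC) (Set.mem_image_of_mem _ hz)
    rw [hx0]
    exact ⟨hr0.le, hcon⟩
  obtain ⟨w, hwC, hwr⟩ := hrmem
  -- f w has the same sign as f x
  have himgf : IsPreconnected (f '' C) := hCpre.image f hf.continuous.continuousOn
  have hnozero : ∀ y ∈ f '' C, y ≠ 0 := by
    rintro y ⟨p, hp, rfl⟩
    exact hCsub hp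
  have hsame : 0 < f x * f w := by
    rcases lt_or_ge 0 (f x * f w) with h | h
    · exact h
    exfalso
    have h0mem : (0:ℝ) ∈ Set.uIcc (f x) (f w) := by
      rcases mul_nonpos_iff.1 h with ⟨ha, hb⟩ | ⟨ha, hb⟩
      · exact Set.mem_uIcc.2 (Or.inr ⟨hb, ha⟩)
      · exact Set.mem_uIcc.2 (Or.inl ⟨ha, hb⟩)
    have := himgf.ordConnected.uIcc_subset (Set.mem_image_of_mem f hxC)
      (Set.mem_image_of_mem f hwC) h0mem
    exact hnozero 0 this rfl
  -- mean value property: the average of f over the circle has sign opposite to f x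
  have hmvp := mvp hf hHelm x hr0.le
  have hJ : besselJ0 r < 0 :=
    besselJ0_neg_between h₁ h₁₂ hz₁ hfirst hsecond hr
  have hintneg : f x * ∫ θ in (0:ℝ)..(2*π), f (pt x r θ) < 0 := by
    have h2 : f x * sphM f x r = f x ^ 2 * besselJ0 r := by rw [hmvp]; ring
    have h3 : f x ^ 2 * besselJ0 r < 0 := by
      have : 0 < f x ^ 2 := by positivity
      nlinarith
    rw [sphM] at h2
    have hpi : 0 < (2*π)⁻¹ := by positivity
    nlinarith [h2, h3]
  -- extract a point on the circle where f has sign opposite to f x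
  have hex : ∃ θ, f x * f (pt x r θ) < 0 := by
    by_contra hall
    push_neg at hall
    have : 0 ≤ f x * ∫ θ in (0:ℝ)..(2*π), f (pt x r θ) := by
      rw [← intervalIntegral.integral_const_mul]
      apply intervalIntegral.integral_nonneg (by positivity)
      exact fun u _ => hall u
    linarith
  obtain ⟨θ₀, hθ₀⟩ := hex
  -- both w and pt x r θ₀ are on the circle, with opposite signs: contradiction
  set S := {z : ℝ × ℝ | euclidNorm (z - x) = r} with hS
  have hwS : w ∈ S := hwr
  have hw'S : pt x r θ₀ ∈ S := euclidNorm_pt_sub hr0.le θ₀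
  have hSpre := circle_preconnected x hr0
  have hprod : f (pt x r θ₀) * f w < 0 := by
    have hx2 : 0 < f x ^ 2 := by positivity
    nlinarith [mul_neg_of_neg_of_pos hθ₀ hsame]
  have h0mem : (0:ℝ) ∈ Set.uIcc (f (pt x r θ₀)) (f w) := by
    rcases mul_neg_iff.1 hprod with ⟨ha, hb⟩ | ⟨ha, hb⟩
    · exact Set.mem_uIcc.2 (Or.inr ⟨hb.le, ha.le⟩)
    · exact Set.mem_uIcc.2 (Or.inl ⟨ha.le, hb.le⟩)
  have h0img : (0:ℝ) ∈ f '' S :=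
    (hSpre.image f hf.continuous.continuousOn).ordConnected.uIcc_subset
      (Set.mem_image_of_mem f hw'S) (Set.mem_image_of_mem f hwS) h0mem
  obtain ⟨y, hyS, hy0⟩ := h0img
  exact hnv y hyS hy0
end

section
/- Any subset of ℝ² of diameter at most r has Lebesgue measure (area) at most π r²/4. -/
open MeasureTheory EuclideanSpace Set Pointwise

/-- One-dimensional Brunn–Minkowski: the Lebesgue measure of a sumset of two nonempty
compact sets is at least the sum of the measures. -/
theorem isodiametric_aux_oneD (S T : Set ℝ) (hS : IsCompact S) (hT : IsCompact T)
    (hSn : S.Nonempty) (hTn : T.Nonempty) : volume S + volume T ≤ volume (S + T) := by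
  set s := sSup S with hs
  set t := sInf T with ht
  have hsS : s ∈ S := hS.sSup_mem hSn
  have htT : t ∈ T := hT.sInf_mem hTn
  set X : Set ℝ := (fun y => y + t) '' S with hX
  set Y : Set ℝ := (fun y => s + y) '' T with hY
  have hXsub : X ⊆ S + T := by
    rintro _ ⟨y, hy, rfl⟩; exact add_mem_add hy htT
  have hYsub : Y ⊆ S + T := by
    rintro _ ⟨y, hy, rfl⟩; exact add_mem_add hsS hy
  have hXvol : volume X = volume S := by
    rw [hX, show (fun y : ℝ => y + t) '' S = (fun y : ℝ => y + (-t)) ⁻¹' S by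
      ext x; simp [sub_eq_add_neg]]
    exact measure_preimage_add_right volume (-t) S
  have hYvol : volume Y = volume T := by
    rw [hY, show (fun y : ℝ => s + y) '' T = (fun y : ℝ => (-s) + y) ⁻¹' T by
      ext x; constructor
      · rintro ⟨y, hy, rfl⟩; simpa using hy
      · intro hx; exact ⟨-s + x, hx, by ring⟩]
    exact measure_preimage_add volume (-s) T
  have hdisj : Disjoint (X \ {s + t}) Y := by
    rw [Set.disjoint_left]
    rintro x ⟨⟨y1, hy1, rfl⟩, hne⟩ ⟨y2, hy2, heq⟩
    apply hne
    have h1 : y1 ≤ s := le_csSup hS.bddAbove hy1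
    have h2 : t ≤ y2 := csInf_le hT.bddBelow hy2
    have heq' : s + y2 = y1 + t := heq
    have : y1 + t = s + t := le_antisymm (by linarith) (by linarith)
    simp [this]
  have hYm : MeasurableSet Y :=
    ((hT.image (continuous_add_left s))).measurableSet
  calc volume S + volume T = volume (X \ {s+t}) + volume Y := by
        rw [hXvol.symm, hYvol.symm, measure_diff_null (measure_singleton _)]
    _ = volume ((X \ {s+t}) ∪ Y) := (measure_union hdisj hYm).symm
    _ ≤ volume (S + T) := measure_mono (union_subset (diff_subset.trans hXsub) hYsub)

theorem isodiametric_aux_oneD_sub (S T : Set ℝ) (hS : IsCompact S) (hT : IsCompact T)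
    (hSn : S.Nonempty) (hTn : T.Nonempty) : volume S + volume T ≤ volume (S - T) := by
  have := isodiametric_aux_oneD S (-T) hS hT.neg hSn hTn.neg
  rwa [Measure.measure_neg, ← sub_eq_add_neg] at this

/-- Affine change of variables for a lower Lebesgue integral on `ℝ`. -/
theorem isodiametric_aux_changevar (f : ℝ → ENNReal) (hf : Measurable f) (c s : ℝ) (hs : s ≠ 0) :
    ∫⁻ x, f (c + s * x) ∂volume = ENNReal.ofReal |s⁻¹| * ∫⁻ u, f u ∂volume := by
  have h1 : (fun x : ℝ => c + s * x) = (fun y : ℝ => c + y) ∘ (fun x : ℝ => s * x) := rfl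
  have hmap : Measure.map (fun x : ℝ => c + s * x) volume
      = ENNReal.ofReal |s⁻¹| • volume := by
    rw [h1, ← Measure.map_map (measurable_const_add c) (measurable_const_mul s),
      Real.map_volume_mul_left hs, Measure.map_smul,
      Measure.IsAddLeftInvariant.map_add_left_eq_self]
  calc ∫⁻ x, f (c + s * x) ∂volume
      = ∫⁻ y, f y ∂(Measure.map (fun x : ℝ => c + s * x) volume) := by
        rw [lintegral_map hf ((measurable_const_mul s).const_add c)]
    _ = ENNReal.ofReal |s⁻¹| * ∫⁻ u, f u ∂volume := by rw [hmap, lintegral_smul_measure, smul_eq_mul]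

/-- The key two-dimensional estimate: for a nonempty compact convex set `K` in the plane,
`4 vol K ≤ vol (K - K)`. -/
theorem isodiametric_aux_twoD (K : Set (ℝ × ℝ)) (hK : IsCompact K) (hKc : Convex ℝ K)
    (hKn : K.Nonempty) : 4 * volume K ≤ volume (K - K) := by
  have hKm : MeasurableSet K := hK.measurableSet
  have hKK : IsCompact (K - K) := by
    rw [sub_eq_add_neg]; exact hK.add hK.neg
  have hKKm : MeasurableSet (K - K) := hKK.measurableSet
  set P : Set ℝ := Prod.fst '' K with hP
  have hPc : IsCompact P := hK.image continuous_fst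
  have hPconv : Convex ℝ P := hKc.linear_image (LinearMap.fst ℝ ℝ ℝ)
  have hPn : P.Nonempty := hKn.image _
  obtain ⟨a, b, hab⟩ : ∃ a b, P = Icc a b :=
    ⟨_, _, eq_Icc_of_connected_compact ⟨hPn, hPconv.isPreconnected⟩ hPc⟩
  have hba : a ≤ b := by
    by_contra h
    rw [Icc_eq_empty h] at hab
    exact hPn.ne_empty (hab)
  set c := (a + b) / 2 with hc
  set f : ℝ → ENNReal := fun u => volume (Prod.mk u ⁻¹' K) with hf
  set g : ℝ → ENNReal := fun x => volume (Prod.mk x ⁻¹' (K - K)) with hg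
  have hfmeas : Measurable f := measurable_measure_prodMk_left hKm
  have hvolK : volume K = ∫⁻ u, f u := by
    rw [Measure.volume_eq_prod, Measure.prod_apply hKm]
  have hvolKK : volume (K - K) = ∫⁻ x, g x := by
    rw [Measure.volume_eq_prod, Measure.prod_apply hKKm]
  -- slices are compact
  have hslice : ∀ u : ℝ, IsCompact (Prod.mk u ⁻¹' K) := by
    intro u
    apply (hK.image continuous_snd).of_isClosed_subset
      (hK.isClosed.preimage (Continuous.prodMk_right u))
    intro y hy
    exact ⟨(u, y), hy, rfl⟩
  have hslicene : ∀ u ∈ P, (Prod.mk u ⁻¹' K).Nonempty := by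
    rintro u ⟨⟨u', y⟩, hmem, rfl⟩
    exact ⟨y, hmem⟩
  -- pointwise inequality between slice measures
  have key : ∀ x : ℝ, f (c + (1/2) * x) + f (c + (-(1/2)) * x) ≤ g x := by
    intro x
    by_cases hx : |x| ≤ b - a
    · rw [abs_le] at hx
      have hmem1 : c + (1/2) * x ∈ P := by
        rw [hab]; constructor <;> [linarith [hx.1]; linarith [hx.2]]
      have hmem2 : c + (-(1/2)) * x ∈ P := by
        rw [hab]; constructor <;> [linarith [hx.2]; linarith [hx.1]]
      have hsub : (Prod.mk (c + (1/2) * x) ⁻¹' K) - (Prod.mk (c + (-(1/2)) * x) ⁻¹' K)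
          ⊆ Prod.mk x ⁻¹' (K - K) := by
        rintro y ⟨y1, hy1, y2, hy2, rfl⟩
        refine ⟨(c + (1/2) * x, y1), hy1, (c + (-(1/2)) * x, y2), hy2, ?_⟩
        simp only [Prod.mk_sub_mk]
        congr 1
        ring
      calc f (c + (1/2) * x) + f (c + (-(1/2)) * x)
          ≤ volume ((Prod.mk (c + (1/2) * x) ⁻¹' K) - (Prod.mk (c + (-(1/2)) * x) ⁻¹' K)) :=
            isodiametric_aux_oneD_sub _ _ (hslice _) (hslice _)
              (hslicene _ hmem1) (hslicene _ hmem2)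
        _ ≤ g x := measure_mono hsub
    · rw [abs_le, not_and_or] at hx
      have h1 : c + (1/2) * x ∉ P ∧ c + (-(1/2)) * x ∉ P := by
        rw [hab]
        constructor <;> intro hm <;> rw [mem_Icc] at hm <;>
          rcases hx with h | h <;> push_neg at h <;>
          first | linarith [hm.2] | linarith [hm.1] | linarith [hm.1, hm.2]
      have e1 : Prod.mk (c + (1/2) * x) ⁻¹' K = ∅ := by
        rw [eq_empty_iff_forall_notMem]
        exact fun y hy => h1.1 ⟨(c + (1/2) * x, y), hy, rfl⟩
      have e2 : Prod.mk (c + (-(1/2)) * x) ⁻¹' K = ∅ := by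
        rw [eq_empty_iff_forall_notMem]
        exact fun y hy => h1.2 ⟨(c + (-(1/2)) * x, y), hy, rfl⟩
      calc f (c + (1/2) * x) + f (c + (-(1/2)) * x)
          = volume (Prod.mk (c + (1/2) * x) ⁻¹' K)
            + volume (Prod.mk (c + (-(1/2)) * x) ⁻¹' K) := rfl
        _ = 0 := by rw [e1, e2]; simp
        _ ≤ g x := zero_le
  -- integrate the pointwise inequality
  have hint : ∫⁻ x, (f (c + (1/2) * x) + f (c + (-(1/2)) * x)) ∂volume ≤ ∫⁻ x, g x :=
    lintegral_mono key
  have hm1 : Measurable fun x : ℝ => f (c + (1/2) * x) :=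
    hfmeas.comp ((measurable_const_mul _).const_add c)
  rw [lintegral_add_left hm1,
    isodiametric_aux_changevar f hfmeas c (1/2) (by norm_num),
    isodiametric_aux_changevar f hfmeas c (-(1/2)) (by norm_num)] at hint
  have habs : ENNReal.ofReal |((1:ℝ)/2)⁻¹| = 2 := by
    norm_num
  have habs2 : ENNReal.ofReal |(-((1:ℝ)/2))⁻¹| = 2 := by
    rw [show |(-((1:ℝ)/2))⁻¹| = 2 by rw [abs_of_nonpos (by norm_num)]; norm_num]
    norm_num
  rw [habs, habs2] at hint
  rw [hvolK, hvolKK]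
  calc 4 * ∫⁻ u, f u = (2 * ∫⁻ u, f u) + 2 * ∫⁻ u, f u := by ring
    _ ≤ ∫⁻ x, g x := hint

/-- Isodiametric inequality in the plane: a subset of `ℝ²` of diameter at most `r`
has Lebesgue measure at most `π r²/4`. -/
theorem isodiametric_plane (A : Set (EuclideanSpace ℝ (Fin 2))) (r : ℝ) (hr : 0 ≤ r)
    (hA : EMetric.diam A ≤ ENNReal.ofReal r) :
    volume A ≤ ENNReal.ofReal (Real.pi * r ^ 2 / 4) := by
  rcases A.eq_empty_or_nonempty with rfl | hne
  · simp
  have hbdA : Bornology.IsBounded A := by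
    rw [Metric.isBounded_iff_ediam_ne_top]
    exact ne_top_of_le_ne_top ENNReal.ofReal_ne_top hA
  set K : Set (EuclideanSpace ℝ (Fin 2)) := closure (convexHull ℝ A) with hK
  have hbdK : Bornology.IsBounded K := (isBounded_convexHull.mpr hbdA).closure
  have hKcomp : IsCompact K := Metric.isCompact_of_isClosed_isBounded isClosed_closure hbdK
  have hKconv : Convex ℝ K := (convex_convexHull ℝ A).closure
  have hAK : A ⊆ K := (subset_convexHull ℝ A).trans subset_closure
  have hKn : K.Nonempty := hne.mono hAK
  have hdiamK : EMetric.diam K ≤ ENNReal.ofReal r := by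
    rw [hK]; change Metric.ediam _ ≤ _; rw [Metric.ediam_closure, convexHull_ediam]; exact hA
  -- K - K is contained in the closed ball of radius r
  have hball : K - K ⊆ Metric.closedBall (0 : EuclideanSpace ℝ (Fin 2)) r := by
    rintro p ⟨x, hx, y, hy, rfl⟩
    rw [Metric.mem_closedBall, dist_zero_right, ← dist_eq_norm]
    have h1 : edist x y ≤ ENNReal.ofReal r :=
      (EMetric.edist_le_diam_of_mem hx hy).trans hdiamK
    rwa [edist_dist, ENNReal.ofReal_le_ofReal_iff hr] at h1
  -- transfer to ℝ × ℝ
  set L : EuclideanSpace ℝ (Fin 2) →L[ℝ] ℝ × ℝ :=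
    (EuclideanSpace.proj (0 : Fin 2)).prod (EuclideanSpace.proj (1 : Fin 2)) with hL
  have hψ : MeasurePreserving
      ((MeasurableEquiv.toLp 2 (Fin 2 → ℝ)).symm.trans (MeasurableEquiv.finTwoArrow) :
        EuclideanSpace ℝ (Fin 2) ≃ᵐ ℝ × ℝ) volume volume :=
    (volume_preserving_finTwoArrow ℝ).comp
      (EuclideanSpace.volume_preserving_symm_measurableEquiv_toLp (Fin 2))
  have hcoe : ⇑((MeasurableEquiv.toLp 2 (Fin 2 → ℝ)).symm.trans (MeasurableEquiv.finTwoArrow)) =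
      ⇑L := by
    funext x
    rfl
  have himg : ∀ S : Set (EuclideanSpace ℝ (Fin 2)), MeasurableSet S →
      volume (L '' S) = volume S := by
    intro S hS
    rw [← hcoe, MeasurableEquiv.image_eq_preimage_symm]
    exact (MeasurePreserving.symm _ hψ).measure_preimage hS.nullMeasurableSet
  set K' : Set (ℝ × ℝ) := L '' K with hK'
  have hK'comp : IsCompact K' := hKcomp.image L.continuous
  have hK'conv : Convex ℝ K' := hKconv.linear_image L.toLinearMap
  have hK'n : K'.Nonempty := hKn.image _
  have hKKcomp : IsCompact (K - K) := by
    rw [sub_eq_add_neg]; exact hKcomp.add hKcomp.neg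
  have himgsub : L '' (K - K) = K' - K' := Set.image_sub L
  -- chain of inequalities
  have main : 4 * volume K ≤ ENNReal.ofReal (Real.pi * r ^ 2) := by
    calc 4 * volume K = 4 * volume K' := by rw [hK', himg K hKcomp.measurableSet]
      _ ≤ volume (K' - K') := isodiametric_aux_twoD K' hK'comp hK'conv hK'n
      _ = volume (L '' (K - K)) := by rw [himgsub]
      _ = volume (K - K) := himg _ hKKcomp.measurableSet
      _ ≤ volume (Metric.closedBall (0 : EuclideanSpace ℝ (Fin 2)) r) := measure_mono hball
      _ = ENNReal.ofReal (Real.pi * r ^ 2) := by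
          rw [EuclideanSpace.volume_closedBall]
          rw [show (Fintype.card (Fin 2)) = 2 from rfl]
          rw [show ((2 : ℕ) : ℝ) / 2 + 1 = 2 by norm_num, Real.Gamma_two, div_one,
            Real.sq_sqrt Real.pi_nonneg, ← ENNReal.ofReal_pow hr,
            ← ENNReal.ofReal_mul (pow_nonneg hr 2), mul_comm]
  have h4 : (4 : ENNReal) * volume A ≤ 4 * volume K := mul_le_mul_right (measure_mono hAK) 4
  have hfin := h4.trans main
  have heq : ENNReal.ofReal (Real.pi * r ^ 2) = 4 * ENNReal.ofReal (Real.pi * r ^ 2 / 4) := by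
    rw [show (4 : ENNReal) = ENNReal.ofReal 4 by norm_num,
      ← ENNReal.ofReal_mul (by norm_num : (0:ℝ) ≤ 4)]
    ring_nf
  rw [heq] at hfin
  exact (ENNReal.mul_le_mul_iff_right (by norm_num) (by norm_num)).mp hfin
end
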